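/- arXiv:2006.02248 — 7 statements merged into one kernel-verified Lean document; each statement's English description precedes it below -/
import Mathlib

section
/- Let A be a g-tuple of d×d real symmetric matrices, X ∈ D_A(n), β ∈ M_{n×1}(ℝ)^g, and γ ∈ ℝ^g. If the dilation Y given by Y_i = [[X_i, β_i],[β_i^T, γ_i]] (an (n+1)×(n+1) symmetric tuple) satisfies L_A(Y) ⪰ 0, then ker L_A(X) ⊆ ker Λ_A(β^T), where Λ_A(β^T) = Σ_i A_i ⊗ β_i^T. -/
open Matrix
open scoped Kronecker

/-- The monic linear pencil `L_A(X) = I - Σ_i A_i ⊗ X_i`. -/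
noncomputable def LA {g : ℕ} {D m : Type*} [Fintype D] [Fintype m] [DecidableEq D] [DecidableEq m]
    (A : Fin g → Matrix D D ℝ) (X : Fin g → Matrix m m ℝ) :
    Matrix (D × m) (D × m) ℝ :=
  1 - ∑ i, A i ⊗ₖ X i

/-- Membership of the symmetric tuple `X` in the free spectrahedron `D_A`. -/
def InDA {g : ℕ} {D m : Type*} [Fintype D] [Fintype m] [DecidableEq D] [DecidableEq m]
    (A : Fin g → Matrix D D ℝ) (X : Fin g → Matrix m m ℝ) : Prop :=
  (∀ i, (X i).IsSymm) ∧ (LA A X).PosSemidef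

/-!
Proof idea: the canonical shuffle `D × (n ⊕ 1) ≃ (D × n) ⊕ (D × 1)` turns `L_A(Y)` into the
block matrix `[[L_A(X), -Λ_A(β)], [-Λ_A(βᵀ), L_A(γ)]]`. For a positive semidefinite block
matrix, a vector `v` in the kernel of the upper left block gives `(v, 0)ᵀ M (v, 0) = 0`, hence
`M (v, 0) = 0`, whose lower component is `-Λ_A(βᵀ) v`.
-/

namespace Matrix

open scoped ComplexOrder in
theorem PosSemidef.mulVec_eq_zero_of_fromBlocks {𝕜 m n : Type*} [RCLike 𝕜] [Fintype m]
    [Fintype n] {P : Matrix m m 𝕜} {Q : Matrix m n 𝕜} {R : Matrix n m 𝕜} {S : Matrix n n 𝕜}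
    (h : (fromBlocks P Q R S).PosSemidef) {v : m → 𝕜} (hv : P *ᵥ v = 0) : R *ᵥ v = 0 := by
  have hext : fromBlocks P Q R S *ᵥ Sum.elim v (0 : n → 𝕜) = Sum.elim (0 : m → 𝕜) (R *ᵥ v) := by
    simp only [fromBlocks_mulVec, Sum.elim_comp_inl, Sum.elim_comp_inr, mulVec_zero, hv,
      add_zero]
  have hzero : fromBlocks P Q R S *ᵥ Sum.elim v (0 : n → 𝕜) = 0 := by
    rw [← h.dotProduct_mulVec_zero_iff, hext]
    simp [dotProduct, Fintype.sum_sum_type]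
  simpa [hext] using congrArg (· ∘ Sum.inr) hzero

theorem kronecker_fromBlocks_submatrix {α l m n o p q : Type*} [Mul α] (A : Matrix l m α)
    (P : Matrix n p α) (Q : Matrix n q α) (R : Matrix o p α) (S : Matrix o q α) :
    (A ⊗ₖ fromBlocks P Q R S).submatrix (Equiv.prodSumDistrib l n o).symm
        (Equiv.prodSumDistrib m p q).symm =
      fromBlocks (A ⊗ₖ P) (A ⊗ₖ Q) (A ⊗ₖ R) (A ⊗ₖ S) := by
  ext (⟨_, _⟩ | ⟨_, _⟩) (⟨_, _⟩ | ⟨_, _⟩) <;> rfl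

end Matrix

theorem LA_fromBlocks_submatrix {g : ℕ} {D m k : Type*} [Fintype D] [Fintype m] [Fintype k]
    [DecidableEq D] [DecidableEq m] [DecidableEq k] (A : Fin g → Matrix D D ℝ)
    (X : Fin g → Matrix m m ℝ) (B : Fin g → Matrix m k ℝ) (C : Fin g → Matrix k m ℝ)
    (E : Fin g → Matrix k k ℝ) :
    (LA A fun i => fromBlocks (X i) (B i) (C i) (E i)).submatrix
        (Equiv.prodSumDistrib D m k).symm (Equiv.prodSumDistrib D m k).symm =
      fromBlocks (LA A X) (-∑ i, A i ⊗ₖ B i) (-∑ i, A i ⊗ₖ C i) (LA A E) := by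
  rw [LA, ← reindex_apply, ← coe_reindexLinearEquiv ℝ ℝ, map_sub, map_sum]
  simp only [coe_reindexLinearEquiv, reindex_apply, submatrix_one_equiv,
    kronecker_fromBlocks_submatrix]
  ext (_ | _) (_ | _) <;> simp [LA, Matrix.sum_apply, one_apply]

theorem dilation_kernel_containment_general {g d n : ℕ}
    (A : Fin g → Matrix (Fin d) (Fin d) ℝ)
    (X : Fin g → Matrix (Fin n) (Fin n) ℝ)
    (β : Fin g → Matrix (Fin n) (Fin 1) ℝ) (γ : Fin g → ℝ)
    (hY : (LA A (fun i => Matrix.fromBlocks (X i) (β i) (β i)ᵀ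
        (γ i • (1 : Matrix (Fin 1) (Fin 1) ℝ)))).PosSemidef) :
    LinearMap.ker (LA A X).mulVecLin ≤
      LinearMap.ker (∑ i, A i ⊗ₖ (β i)ᵀ).mulVecLin := by
  intro v hv
  have hshuffled := (posSemidef_submatrix_equiv (Equiv.prodSumDistrib _ _ _).symm).2 hY
  rw [LA_fromBlocks_submatrix] at hshuffled
  simpa only [LinearMap.mem_ker, mulVecLin_apply, neg_mulVec, neg_eq_zero] using
    hshuffled.mulVec_eq_zero_of_fromBlocks (LinearMap.mem_ker.1 hv)

/-- if the one-dimensional dilation `[[X,β],[βᵀ,γ]]` satisfies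
`L_A(Y) ⪰ 0`, then `ker L_A(X) ⊆ ker Λ_A(βᵀ)`. -/
theorem dilation_kernel_containment {g d n : ℕ}
    (A : Fin g → Matrix (Fin d) (Fin d) ℝ) (hA : ∀ i, (A i).IsSymm)
    (X : Fin g → Matrix (Fin n) (Fin n) ℝ) (hX : InDA A X)
    (β : Fin g → Matrix (Fin n) (Fin 1) ℝ) (γ : Fin g → ℝ)
    (hY : (LA A (fun i => Matrix.fromBlocks (X i) (β i) (β i)ᵀ
        (γ i • (1 : Matrix (Fin 1) (Fin 1) ℝ)))).PosSemidef) :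
    LinearMap.ker (LA A X).mulVecLin ≤
      LinearMap.ker (∑ i, A i ⊗ₖ (β i)ᵀ).mulVecLin :=
  dilation_kernel_containment_general A X β γ hY
end

section
/- Let A be a g-tuple of d×d real symmetric matrices and X ∈ D_A(n). Then X is an Arveson extreme point of D_A if and only if the only solution β ∈ M_{n×1}(ℝ)^g of the homogeneous linear system Λ_A(β^T) P_{A,X} = 0 is β = 0, where P_{A,X} is a matrix whose columns form an orthonormal basis for ker L_A(X). -/
open Matrix
open scoped Kronecker

/-- `X` is an Arveson extreme point of `D_A`: every dilation `[[X,β],[βᵀ,γ]] ∈ D_A`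
forces `β = 0`. -/
def IsArvExt {g d n : ℕ} (A : Fin g → Matrix (Fin d) (Fin d) ℝ)
    (X : Fin g → Matrix (Fin n) (Fin n) ℝ) : Prop :=
  InDA A X ∧ ∀ (k : ℕ) (β : Fin g → Matrix (Fin n) (Fin k) ℝ)
    (γ : Fin g → Matrix (Fin k) (Fin k) ℝ),
      InDA A (fun i => Matrix.fromBlocks (X i) (β i) (β i)ᵀ (γ i)) → β = 0

/-!
If `ker L_A(X) ⊆ ker Λ_A(βᵀ)`, factor `L_A(X) = BᵀB`; the kernel inclusion makes `Λ_A(βᵀ) = G B`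
for some `G`, so `c² Λ_A(β) Λ_A(βᵀ) = Bᵀ (c² GᵀG) B ≤ L_A(X)` once `c > 0` is small, and by the
Schur complement (with lower right block `L_A(0) = I`) the dilation of `X` by `(c β, 0)` lies in
`D_A`. Conversely, if a dilation `[[X, β], [βᵀ, γ]]` lies in `D_A`, a kernel vector of `L_A(X)`
padded by zeros is a null vector of the positive semidefinite pencil, hence is killed by the
whole pencil and in particular by `Λ_A(βᵀ)`; reading this off column by column of `β` gives
solutions of the `n × 1` system. Since the columns of `P` span `ker L_A(X)`, `Λ_A(βᵀ) P = 0` is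
exactly the kernel inclusion.
-/

namespace Matrix

theorem exists_mul_eq_of_ker_le {R : Type*} [Field R] {l m n : Type*} [Fintype m] [Fintype n]
    [DecidableEq m] [DecidableEq n] (B : Matrix m n R) (C : Matrix l n R)
    (h : LinearMap.ker B.mulVecLin ≤ LinearMap.ker C.mulVecLin) :
    ∃ G : Matrix l m R, G * B = C := by
  obtain ⟨G, hG⟩ := LinearMap.exists_extend <|
    (LinearMap.ker B.mulVecLin).liftQ C.mulVecLin h ∘ₗ B.mulVecLin.quotKerEquivRange.symm.toLinearMap
  refine ⟨LinearMap.toMatrix' G, toLin'.injective <| LinearMap.ext fun v => ?_⟩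
  have := LinearMap.congr_fun hG ⟨B.mulVecLin v, LinearMap.mem_range_self B.mulVecLin v⟩
  rw [LinearMap.comp_apply, LinearMap.comp_apply, LinearEquiv.coe_coe,
    LinearMap.quotKerEquivRange_symm_apply_image] at this
  simpa [toLin'_mul] using this

theorem mul_eq_zero_iff_ker_le {R : Type*} [CommRing R] {l m k : Type*} [Fintype m] [Fintype k]
    [DecidableEq k] {L : Matrix m m R} {P : Matrix m k R}
    (hP : LinearMap.range P.mulVecLin = LinearMap.ker L.mulVecLin) (N : Matrix l m R) :
    N * P = 0 ↔ LinearMap.ker L.mulVecLin ≤ LinearMap.ker N.mulVecLin := by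
  rw [← hP, LinearMap.range_le_ker_iff, ← mulVecLin_mul, ← toLin'_apply', ← map_zero toLin',
    toLin'.injective.eq_iff]

theorem ker_mulVecLin_le_ker_submatrix {R : Type*} [CommRing R] {l l' m : Type*} [Fintype m]
    (N : Matrix l m R) (r : l' → l) :
    LinearMap.ker N.mulVecLin ≤ LinearMap.ker (N.submatrix r id).mulVecLin :=
  fun _ hv => funext fun x => congrFun (LinearMap.mem_ker.mp hv) (r x)

open scoped ComplexOrder in
theorem PosSemidef.ker_le_ker_of_fromBlocks {𝕜 : Type*} [RCLike 𝕜] {m p : Type*}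
    [Fintype m] [Fintype p] {L : Matrix m m 𝕜} {B : Matrix m p 𝕜} {C : Matrix p m 𝕜}
    {D : Matrix p p 𝕜} (h : (fromBlocks L B C D).PosSemidef) :
    LinearMap.ker L.mulVecLin ≤ LinearMap.ker C.mulVecLin := by
  intro v hv
  have hLv : L *ᵥ v = 0 := hv
  have hzero := (h.dotProduct_mulVec_zero_iff (Sum.elim v 0)).mp <| by
    simp [fromBlocks_mulVec, hLv, Function.star_sumElim, sumElim_dotProduct_sumElim]
  simpa [fromBlocks_mulVec] using congrArg (· ∘ Sum.inr) hzero

theorem mulVec_dotProduct_mulVec_self_le {l m : Type*} [Fintype l] [Fintype m]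
    (G : Matrix l m ℝ) (u : m → ℝ) :
    (G *ᵥ u) ⬝ᵥ (G *ᵥ u) ≤ (∑ i, ∑ j, G i j ^ 2) * (u ⬝ᵥ u) := by
  rw [Finset.sum_mul]
  refine Finset.sum_le_sum fun i _ => ?_
  simpa only [mulVec, dotProduct, ← sq] using Finset.sum_mul_sq_le_sq_mul_sq Finset.univ (G i) u

theorem exists_pos_posSemidef_one_sub_transpose_mul_self {l m : Type*} [Fintype l] [Fintype m]
    [DecidableEq m] (G : Matrix l m ℝ) :
    ∃ c : ℝ, 0 < c ∧ (1 - (c • G)ᵀ * (c • G)).PosSemidef := by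
  set K := ∑ i, ∑ j, G i j ^ 2
  have hK : 0 ≤ K := by positivity
  refine ⟨(K + 1)⁻¹, by positivity, .of_dotProduct_mulVec_nonneg ?_ fun x => ?_⟩
  · rw [IsHermitian, conjTranspose_eq_transpose_of_trivial, transpose_sub, transpose_mul,
      transpose_transpose, transpose_one]
  · have hquad : star x ⬝ᵥ ((1 - ((K + 1)⁻¹ • G)ᵀ * ((K + 1)⁻¹ • G)) *ᵥ x) =
        x ⬝ᵥ x - (K + 1)⁻¹ ^ 2 * ((G *ᵥ x) ⬝ᵥ (G *ᵥ x)) := by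
      rw [star_trivial, sub_mulVec, one_mulVec, dotProduct_sub, ← mulVec_mulVec,
        dotProduct_mulVec, vecMul_transpose]
      simp only [smul_mulVec, smul_dotProduct, dotProduct_smul, smul_eq_mul]
      ring
    have hcK : (K + 1)⁻¹ ^ 2 * K ≤ 1 := by
      rw [inv_pow, inv_mul_le_one₀ (by positivity)]
      nlinarith
    have hx : 0 ≤ x ⬝ᵥ x := dotProduct_self_star_nonneg x
    rw [hquad]
    nlinarith [mul_le_mul_of_nonneg_left (G.mulVec_dotProduct_mulVec_self_le x)
      (sq_nonneg (K + 1)⁻¹)]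

open scoped MatrixOrder in
theorem exists_pos_posSemidef_sub_mul_transpose {m k : Type*} [Fintype m] [Fintype k]
    [DecidableEq m] {L : Matrix m m ℝ} (hL : L.PosSemidef) (N : Matrix m k ℝ)
    (h : LinearMap.ker L.mulVecLin ≤ LinearMap.ker Nᵀ.mulVecLin) :
    ∃ c : ℝ, 0 < c ∧ (L - (c • N) * (c • N)ᵀ).PosSemidef := by
  obtain ⟨B, rfl⟩ := CStarAlgebra.nonneg_iff_eq_star_mul_self.mp hL.nonneg
  have hB : LinearMap.ker B.mulVecLin ≤ LinearMap.ker Nᵀ.mulVecLin := fun v hv =>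
    h <| by rw [LinearMap.mem_ker, mulVecLin_apply, ← mulVec_mulVec, ← mulVecLin_apply B,
      LinearMap.mem_ker.mp hv, mulVec_zero]
  obtain ⟨G, hG⟩ := exists_mul_eq_of_ker_le B Nᵀ hB
  obtain ⟨c, hc, hG1⟩ := exists_pos_posSemidef_one_sub_transpose_mul_self G
  refine ⟨c, hc, ?_⟩
  have hN : N = (G * B)ᵀ := by rw [hG, transpose_transpose]
  convert hG1.conjTranspose_mul_mul_same B using 1
  simp only [hN, star_eq_conjTranspose, conjTranspose_eq_transpose_of_trivial, transpose_mul,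
    transpose_smul, transpose_transpose, Matrix.mul_sub, Matrix.sub_mul, Matrix.mul_one,
    Matrix.smul_mul, Matrix.mul_smul, Matrix.mul_assoc]

end Matrix

section Pencil

variable {g : ℕ} {D m p : Type*}

lemma sum_kronecker_transpose_submatrix (A : Fin g → Matrix D D ℝ) (β : Fin g → Matrix m p ℝ)
    (j : p) :
    ∑ i, A i ⊗ₖ ((β i).submatrix id fun _ : Fin 1 => j)ᵀ =
      (∑ i, A i ⊗ₖ (β i)ᵀ).submatrix (Prod.map id fun _ => j) id := by
  ext
  simp [Matrix.sum_apply]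

lemma transpose_sum_kronecker {A : Fin g → Matrix D D ℝ} (hA : ∀ i, (A i).IsSymm)
    (β : Fin g → Matrix m p ℝ) : (∑ i, A i ⊗ₖ β i)ᵀ = ∑ i, A i ⊗ₖ (β i)ᵀ := by
  simp only [Matrix.transpose_sum, ← Matrix.kroneckerMap_transpose, (hA _).eq]

variable [Fintype D] [Fintype m] [Fintype p] [DecidableEq D] [DecidableEq m] [DecidableEq p]

lemma LA_fromBlocks (A : Fin g → Matrix D D ℝ) (X : Fin g → Matrix m m ℝ)
    (β : Fin g → Matrix m p ℝ) (δ : Fin g → Matrix p m ℝ) (γ : Fin g → Matrix p p ℝ) :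
    LA A (fun i => Matrix.fromBlocks (X i) (β i) (δ i) (γ i)) =
      (Matrix.fromBlocks (LA A X) (-∑ i, A i ⊗ₖ β i) (-∑ i, A i ⊗ₖ δ i) (LA A γ)).submatrix
        (Equiv.prodSumDistrib D m p) (Equiv.prodSumDistrib D m p) := by
  ext ⟨a, r | r⟩ ⟨b, s | s⟩ <;>
    simp [LA, Matrix.sub_apply, Matrix.sum_apply, Matrix.one_apply, Prod.ext_iff,
      Equiv.prodSumDistrib]

lemma ker_le_of_inDA_fromBlocks {A : Fin g → Matrix D D ℝ} {X : Fin g → Matrix m m ℝ}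
    {β : Fin g → Matrix m p ℝ} {γ : Fin g → Matrix p p ℝ}
    (h : InDA A (fun i => Matrix.fromBlocks (X i) (β i) (β i)ᵀ (γ i))) :
    LinearMap.ker (LA A X).mulVecLin ≤ LinearMap.ker (∑ i, A i ⊗ₖ (β i)ᵀ).mulVecLin := by
  have hpsd := h.2
  rw [LA_fromBlocks, Matrix.posSemidef_submatrix_equiv] at hpsd
  simpa using hpsd.ker_le_ker_of_fromBlocks

lemma exists_inDA_fromBlocks_of_ker_le {A : Fin g → Matrix D D ℝ} (hA : ∀ i, (A i).IsSymm)
    {X : Fin g → Matrix m m ℝ} (hX : InDA A X) (β : Fin g → Matrix m p ℝ)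
    (h : LinearMap.ker (LA A X).mulVecLin ≤ LinearMap.ker (∑ i, A i ⊗ₖ (β i)ᵀ).mulVecLin) :
    ∃ c : ℝ, c ≠ 0 ∧ InDA A (fun i => Matrix.fromBlocks (X i) (c • β i) (c • β i)ᵀ 0) := by
  set M := ∑ i, A i ⊗ₖ β i
  rw [← transpose_sum_kronecker hA] at h
  obtain ⟨c, hc, hpsd⟩ := Matrix.exists_pos_posSemidef_sub_mul_transpose hX.2 M h
  refine ⟨c, hc.ne', fun i => ?_, ?_⟩
  · rw [Matrix.IsSymm, Matrix.fromBlocks_transpose, (hX.1 i).eq, Matrix.transpose_transpose,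
      Matrix.transpose_zero]
  · have hsmul : ∑ i, A i ⊗ₖ (c • β i) = c • M := by
      simp only [M, Finset.smul_sum, Matrix.kronecker_smul]
    have hsmulT : ∑ i, A i ⊗ₖ (c • β i)ᵀ = (c • M)ᴴ := by
      rw [Matrix.conjTranspose_eq_transpose_of_trivial, ← hsmul, transpose_sum_kronecker hA]
    have hLA0 : LA A (fun _ => (0 : Matrix p p ℝ)) = 1 := by simp [LA]
    have : Invertible (1 : Matrix (D × p) (D × p) ℝ) := invertibleOne
    rw [LA_fromBlocks, Matrix.posSemidef_submatrix_equiv, hsmul, hsmulT, hLA0,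
      ← Matrix.conjTranspose_neg, Matrix.PosDef.fromBlocks₂₂ _ _ Matrix.PosDef.one]
    simpa [Matrix.conjTranspose_eq_transpose_of_trivial] using hpsd

end Pencil

theorem arveson_extreme_iff_linear_system_general {g d n k : ℕ}
    (A : Fin g → Matrix (Fin d) (Fin d) ℝ) (hA : ∀ i, (A i).IsSymm)
    (X : Fin g → Matrix (Fin n) (Fin n) ℝ) (hX : InDA A X)
    (P : Matrix (Fin d × Fin n) (Fin k) ℝ)
    (hP2 : LinearMap.range P.mulVecLin = LinearMap.ker (LA A X).mulVecLin) :
    IsArvExt A X ↔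
      ∀ β : Fin g → Matrix (Fin n) (Fin 1) ℝ,
        (∑ i, A i ⊗ₖ (β i)ᵀ) * P = 0 → β = 0 := by
  constructor
  · rintro ⟨-, hArv⟩ β hβ
    obtain ⟨c, hc, hdil⟩ :=
      exists_inDA_fromBlocks_of_ker_le hA hX β ((Matrix.mul_eq_zero_iff_ker_le hP2 _).mp hβ)
    have hcβ := hArv 1 (fun i => c • β i) 0 hdil
    funext i
    exact (smul_eq_zero.mp (congrFun hcβ i)).resolve_left hc
  · refine fun hsol => ⟨hX, fun k β γ hdil => ?_⟩
    funext i
    ext r j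
    have hcol := hsol (fun i => (β i).submatrix id fun _ => j) <| by
      rw [Matrix.mul_eq_zero_iff_ker_le hP2, sum_kronecker_transpose_submatrix]
      exact (ker_le_of_inDA_fromBlocks hdil).trans (Matrix.ker_mulVecLin_le_ker_submatrix _ _)
    exact congrFun (congrFun (congrFun hcol i) r) 0

/-- `X` is Arveson extreme iff the homogeneous linear system
`Λ_A(βᵀ) P_{A,X} = 0` has only the trivial solution. -/
theorem arveson_extreme_iff_linear_system {g d n k : ℕ}
    (A : Fin g → Matrix (Fin d) (Fin d) ℝ) (hA : ∀ i, (A i).IsSymm)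
    (X : Fin g → Matrix (Fin n) (Fin n) ℝ) (hX : InDA A X)
    (P : Matrix (Fin d × Fin n) (Fin k) ℝ)
    (hP1 : Pᵀ * P = 1)
    (hP2 : LinearMap.range P.mulVecLin = LinearMap.ker (LA A X).mulVecLin) :
    IsArvExt A X ↔
      ∀ β : Fin g → Matrix (Fin n) (Fin 1) ℝ,
        (∑ i, A i ⊗ₖ (β i)ᵀ) * P = 0 → β = 0 :=
  arveson_extreme_iff_linear_system_general A hA X hX P hP2
end

section
/- Let A be a g-tuple of d×d real symmetric matrices and let X ∈ D_A(n) be an Arveson extreme point of D_A, where A is a minimal defining tuple. Then gn ≤ d·k_{A,X}, where k_{A,X} = dim ker L_A(X). -/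
open Matrix
open scoped Kronecker

/-!
If `(Σ A_i ⊗ β_i)ᵀ` vanishes on `ker L_A(X)`, it factors as `N √L_A(X)`, so
`t² (Σ A_i ⊗ β_i)(Σ A_i ⊗ β_i)ᵀ ⪯ L_A(X)` for small `t > 0`. By a Schur complement the
dilation `[[X, tβ], [tβᵀ, 0]]` then lies in `D_A`, and Arveson extremality forces `β = 0`.
Hence `β ↦ (Σ A_i ⊗ β_i)ᵀ|_{ker L_A(X)}` is injective from `ℝ^{gn}` into
`Hom(ker L_A(X), ℝ^d)`, and comparing dimensions gives `gn ≤ d k_{A,X}`.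
-/

theorem LinearMap.exists_comp_eq_of_ker_le {K V W U : Type*} [DivisionRing K]
    [AddCommGroup V] [Module K V] [AddCommGroup W] [Module K W] [AddCommGroup U] [Module K U]
    (f : V →ₗ[K] W) (g : V →ₗ[K] U) (h : LinearMap.ker f ≤ LinearMap.ker g) :
    ∃ C : W →ₗ[K] U, C ∘ₗ f = g := by
  obtain ⟨F, hF⟩ := ((LinearMap.ker f).liftQ f le_rfl).exists_leftInverse_of_injective
    ((LinearMap.ker f).ker_liftQ_eq_bot f le_rfl le_rfl)
  refine ⟨(LinearMap.ker f).liftQ g h ∘ₗ F, LinearMap.ext fun v => ?_⟩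
  have hFv : F (f v) = (LinearMap.ker f).mkQ v := by
    simpa using LinearMap.congr_fun hF ((LinearMap.ker f).mkQ v)
  simp [hFv]

theorem Matrix.exists_mul_eq_of_ker_le_s6 {K m p r : Type*} [Field K] [Fintype m] [Fintype p]
    [DecidableEq p] {S : Matrix p m K} {W : Matrix r m K}
    (h : ∀ v, S *ᵥ v = 0 → W *ᵥ v = 0) : ∃ N : Matrix r p K, N * S = W := by
  obtain ⟨C, hC⟩ := S.mulVecLin.exists_comp_eq_of_ker_le W.mulVecLin fun v => h v
  refine ⟨LinearMap.toMatrix' C, ext_iff_mulVec.mpr fun v => ?_⟩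
  rw [← mulVec_mulVec, ← toLin'_apply, toLin'_toMatrix', ← mulVecLin_apply]
  exact LinearMap.congr_fun hC v

open scoped MatrixOrder ComplexOrder in
theorem Matrix.IsHermitian.exists_pos_posSemidef_one_sub_smul {𝕜 m : Type*} [RCLike 𝕜]
    [Fintype m] [DecidableEq m] {M : Matrix m m 𝕜} (hM : M.IsHermitian) :
    ∃ c : ℝ, 0 < c ∧ (1 - c • M).PosSemidef := by
  obtain ⟨r, hr⟩ := M.finite_real_spectrum.bddAbove
  set R := max r 1
  have hR : 0 < R := zero_lt_one.trans_le (le_max_right r 1)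
  have hle : M ≤ algebraMap ℝ _ R :=
    le_algebraMap_of_spectrum_le (fun x hx => (hr hx).trans (le_max_left r 1)) hM.isSelfAdjoint
  refine ⟨R⁻¹, inv_pos.mpr hR, ?_⟩
  convert (Matrix.le_iff.mp hle).smul (inv_nonneg.mpr hR.le) using 1
  rw [Algebra.algebraMap_eq_smul_one, smul_sub, smul_smul, inv_mul_cancel₀ hR.ne', one_smul]

open scoped MatrixOrder ComplexOrder in
theorem Matrix.PosSemidef.exists_pos_posSemidef_sub_smul_mul_conjTranspose {𝕜 m r : Type*}
    [RCLike 𝕜] [Fintype m] [Fintype r] [DecidableEq m] {L : Matrix m m 𝕜} (hL : L.PosSemidef)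
    (B : Matrix m r 𝕜) (h : ∀ v, L *ᵥ v = 0 → Bᴴ *ᵥ v = 0) :
    ∃ c : ℝ, 0 < c ∧ (L - c • (B * Bᴴ)).PosSemidef := by
  set S := CFC.sqrt L
  have hSS : S * S = L := CFC.sqrt_mul_sqrt_self L hL.nonneg
  have hS : Sᴴ = S := (CFC.sqrt_nonneg L).posSemidef.1
  obtain ⟨N, hN⟩ : ∃ N, N * S = Bᴴ :=
    exists_mul_eq_of_ker_le_s6 fun v hv => h v (by rw [← hSS, ← mulVec_mulVec, hv, mulVec_zero])
  obtain ⟨c, hc, hpos⟩ := (isHermitian_conjTranspose_mul_self N).exists_pos_posSemidef_one_sub_smul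
  refine ⟨c, hc, ?_⟩
  have hB : B = S * Nᴴ := by simpa [hS] using congrArg (·ᴴ) hN.symm
  -- `L - c • B Bᴴ = S (1 - c • Nᴴ N) S` since `Bᴴ = N S`
  convert hpos.conjTranspose_mul_mul_same S using 1
  rw [← hN, hB, hS, ← hSS]
  simp only [Matrix.mul_sub, Matrix.sub_mul, Matrix.mul_one, Matrix.mul_smul, Matrix.smul_mul,
    Matrix.mul_assoc]

section Dilation

variable {g : ℕ} {D m k : Type*} [Fintype D] [Fintype m] [Fintype k] [DecidableEq D]
  [DecidableEq m] [DecidableEq k]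

@[simp]
theorem LA_zero (A : Fin g → Matrix D D ℝ) : LA A (fun _ => (0 : Matrix m m ℝ)) = 1 := by
  simp [LA]

theorem LA_fromBlocks_submatrix_prodSumDistrib (A : Fin g → Matrix D D ℝ) (hA : ∀ i, (A i).IsSymm)
    (X : Fin g → Matrix m m ℝ) (β : Fin g → Matrix m k ℝ) (γ : Fin g → Matrix k k ℝ) :
    (LA A fun i => fromBlocks (X i) (β i) (β i)ᵀ (γ i)).submatrix
        (Equiv.prodSumDistrib D m k).symm (Equiv.prodSumDistrib D m k).symm =
      fromBlocks (LA A X) (-∑ i, A i ⊗ₖ β i) (-∑ i, A i ⊗ₖ β i)ᴴ (LA A γ) := by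
  ext (⟨p, q⟩ | ⟨p, q⟩) (⟨p', q'⟩ | ⟨p', q'⟩) <;>
    simp [LA, one_apply, Matrix.sum_apply, Prod.ext_iff, (hA _).apply]

theorem exists_inDA_fromBlocks_smul_of_ker_le {A : Fin g → Matrix D D ℝ} (hA : ∀ i, (A i).IsSymm)
    {X : Fin g → Matrix m m ℝ} (hX : InDA A X) (β : Fin g → Matrix m k ℝ)
    (h : ∀ v, LA A X *ᵥ v = 0 → (∑ i, A i ⊗ₖ β i)ᴴ *ᵥ v = 0) :
    ∃ t : ℝ, t ≠ 0 ∧ InDA A fun i => fromBlocks (X i) (t • β i) (t • β i)ᵀ 0 := by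
  obtain ⟨c, hc, hpos⟩ := hX.2.exists_pos_posSemidef_sub_smul_mul_conjTranspose _ h
  refine ⟨√c, (Real.sqrt_pos.mpr hc).ne', fun i => ?_, ?_⟩
  · simp [IsSymm, fromBlocks_transpose, (hX.1 i).eq]
  · let _ : Invertible (1 : Matrix (D × k) (D × k) ℝ) := invertibleOne
    rw [← posSemidef_submatrix_equiv (Equiv.prodSumDistrib D m k).symm,
      LA_fromBlocks_submatrix_prodSumDistrib A hA, LA_zero, PosDef.fromBlocks₂₂ _ _ PosDef.one,
      inv_one, Matrix.mul_one]
    have hsq : (-∑ i, A i ⊗ₖ (√c • β i)) * (-∑ i, A i ⊗ₖ (√c • β i))ᴴ =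
        c • ((∑ i, A i ⊗ₖ β i) * (∑ i, A i ⊗ₖ β i)ᴴ) := by
      simp only [kronecker_smul, ← Finset.smul_sum, conjTranspose_neg, conjTranspose_smul,
        star_trivial, Matrix.neg_mul, Matrix.mul_neg, smul_neg, neg_neg, Matrix.smul_mul,
        Matrix.mul_smul, smul_smul, Real.mul_self_sqrt hc.le]
    rwa [hsq]

end Dilation

section ArvesonSystem

variable {g : ℕ} {D m k : Type*} [Fintype D] [Fintype m] [DecidableEq D] [DecidableEq m]

/-- The map `β ↦ Λ_A(βᵀ) P_{A,X}` of the paper. -/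
noncomputable def arvesonSystem (A : Fin g → Matrix D D ℝ) (X : Fin g → Matrix m m ℝ) :
    (Fin g → Matrix m k ℝ) →ₗ[ℝ] LinearMap.ker (LA A X).mulVecLin →ₗ[ℝ] (D × k → ℝ) where
  toFun β := (∑ i, A i ⊗ₖ β i)ᴴ.mulVecLin ∘ₗ (LinearMap.ker (LA A X).mulVecLin).subtype
  map_add' β β' := by
    ext
    simp [kronecker_add, Finset.sum_add_distrib]
  map_smul' c β := by
    ext
    simp [kronecker_smul, ← Finset.smul_sum]

@[simp]
theorem arvesonSystem_apply_apply (A : Fin g → Matrix D D ℝ) (X : Fin g → Matrix m m ℝ)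
    (β : Fin g → Matrix m k ℝ) (v : LinearMap.ker (LA A X).mulVecLin) :
    arvesonSystem A X β v = (∑ i, A i ⊗ₖ β i)ᴴ *ᵥ v :=
  rfl

end ArvesonSystem

theorem IsArvExt.injective_arvesonSystem {g d n : ℕ} {A : Fin g → Matrix (Fin d) (Fin d) ℝ}
    (hA : ∀ i, (A i).IsSymm) {X : Fin g → Matrix (Fin n) (Fin n) ℝ} (hX : IsArvExt A X)
    (k : ℕ) : Function.Injective (arvesonSystem A X (k := Fin k)) := by
  refine (injective_iff_map_eq_zero _).mpr fun β hβ => ?_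
  obtain ⟨t, ht, hdil⟩ := exists_inDA_fromBlocks_smul_of_ker_le hA hX.1 β fun v hv => by
    simpa using LinearMap.congr_fun hβ ⟨v, hv⟩
  exact (smul_eq_zero.mp (hX.2 k (t • β) 0 hdil)).resolve_left ht

theorem arveson_kernel_count_general {g d n : ℕ}
    (A : Fin g → Matrix (Fin d) (Fin d) ℝ) (hA : ∀ i, (A i).IsSymm)
    (X : Fin g → Matrix (Fin n) (Fin n) ℝ) (hX : IsArvExt A X) :
    g * n ≤ d * Module.finrank ℝ (LinearMap.ker (LA A X).mulVecLin) := by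
  have hdim := LinearMap.finrank_le_finrank_of_injective (hX.injective_arvesonSystem hA 1)
  simpa [Module.finrank_linearMap, Module.finrank_pi_fintype, Module.finrank_matrix, mul_comm]
    using hdim

/-- for a minimal defining tuple `A`, if `X` is an Arveson extreme point
of `D_A(n)` then `gn ≤ d·k_{A,X}` where `k_{A,X} = dim ker L_A(X)`. -/
theorem arveson_kernel_count {g d n : ℕ}
    (A : Fin g → Matrix (Fin d) (Fin d) ℝ) (hA : ∀ i, (A i).IsSymm)
    (hmin : ∀ (d' : ℕ) (B : Fin g → Matrix (Fin d') (Fin d') ℝ),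
      (∀ i, (B i).IsSymm) →
      (∀ (m : ℕ) (Z : Fin g → Matrix (Fin m) (Fin m) ℝ), InDA A Z ↔ InDA B Z) →
      d ≤ d')
    (X : Fin g → Matrix (Fin n) (Fin n) ℝ) (hX : IsArvExt A X) :
    g * n ≤ d * Module.finrank ℝ (LinearMap.ker (LA A X).mulVecLin) :=
  arveson_kernel_count_general A hA X hX
end

section
/- Let A be a g-tuple of d×d real symmetric matrices and let X ∈ D_A(n). X is a Euclidean extreme point of D_A(n) if and only if the only β ∈ SM_n(ℝ)^g satisfying [[X,β],[β,γ]] ∈ D_A(2n) for some γ ∈ SM_n(ℝ)^g is β = 0. -/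
/-!
If `[[X, β], [β, γ]] ∈ D_A`, then `L_A` of the dilation is a positive semidefinite block matrix
with `L_A(X)` as a diagonal block and `-Σ Aᵢ ⊗ βᵢ` as both off-diagonal blocks, so the kernel of
`L_A(X)` lies in the kernel of `Σ Aᵢ ⊗ βᵢ`. In an eigenbasis of `L_A(X)` the perturbation
`L_A(X ± sβ)` is then diagonally dominant for small `s`, hence positive semidefinite by
Gershgorin's theorem, and `X` is the midpoint of `X + sβ` and `X - sβ`.

Conversely, if `X = tY + (1 - t)Z`, conjugating `Y ⊕ Z` by the orthogonal matrix
`[[c, s], [s, -c]]` with `c = √t`, `s = √(1 - t)` gives a dilation of `X` in `D_A` with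
`β = cs(Y - Z)`.
-/

open Matrix
open scoped Kronecker

/-- `X` is a Euclidean (classical) extreme point of the level-`n` spectrahedron
`D_A(n)`. -/
def IsEucExt {g d n : ℕ} (A : Fin g → Matrix (Fin d) (Fin d) ℝ)
    (X : Fin g → Matrix (Fin n) (Fin n) ℝ) : Prop :=
  InDA A X ∧ ∀ (Y Z : Fin g → Matrix (Fin n) (Fin n) ℝ) (t : ℝ),
    InDA A Y → InDA A Z → 0 < t → t < 1 →
    X = (fun i => t • Y i + (1 - t) • Z i) → Y = X ∧ Z = X

open Filter Topology

namespace Matrix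

open scoped ComplexOrder in
theorem PosSemidef.mulVec_mulVec_eq_zero {𝕜 ι κ : Type*} [RCLike 𝕜] [Fintype ι] [Fintype κ]
    {M : Matrix ι ι 𝕜} (hM : M.PosSemidef) {P : Matrix ι κ 𝕜} {v : κ → 𝕜}
    (h : (Pᴴ * M * P) *ᵥ v = 0) : M *ᵥ (P *ᵥ v) = 0 := by
  refine (hM.dotProduct_mulVec_zero_iff _).1 ?_
  have : star (P *ᵥ v) ⬝ᵥ M *ᵥ (P *ᵥ v) = star v ⬝ᵥ (Pᴴ * M * P) *ᵥ v := by
    simp only [star_mulVec, dotProduct_mulVec, vecMul_vecMul]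
  rw [this, h, dotProduct_zero]

theorem fromRows_smul_one_mul_mul_transpose {R m : Type*} [CommRing R] [Fintype m] [DecidableEq m]
    (a b : R) (M : Matrix m m R) :
    fromRows (a • (1 : Matrix m m R)) (b • 1) * M * (fromRows (a • (1 : Matrix m m R)) (b • 1))ᵀ =
      fromBlocks ((a * a) • M) ((a * b) • M) ((b * a) • M) ((b * b) • M) := by
  rw [transpose_fromRows, fromRows_mul, fromRows_mul_fromCols]
  simp [smul_smul, mul_comm]

variable {ι : Type*} [Fintype ι] [DecidableEq ι]

theorem IsHermitian.posSemidef_of_sum_row_le_diag {M : Matrix ι ι ℝ} (hM : M.IsHermitian)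
    (hdom : ∀ k, ∑ j ∈ Finset.univ.erase k, |M k j| ≤ M k k) : M.PosSemidef := by
  refine hM.posSemidef_iff_eigenvalues_nonneg.2 fun k => ?_
  have hk : Module.End.HasEigenvalue (toLin' M) (hM.eigenvalues k) :=
    Module.End.hasEigenvalue_iff_mem_spectrum.2 <| by
      rw [spectrum_toLin']
      exact hM.eigenvalues_mem_spectrum_real k
  obtain ⟨j, hj⟩ := eigenvalue_mem_ball hk
  rw [Metric.mem_closedBall, Real.dist_eq] at hj
  simp only [Real.norm_eq_abs] at hj
  have := hdom j
  have := neg_abs_le (hM.eigenvalues k - M j j)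
  rw [Pi.zero_apply]
  linarith

theorem eventually_posSemidef_diagonal_add_smul {μ : ι → ℝ} (hμ : 0 ≤ μ) {B : Matrix ι ι ℝ}
    (hB : B.IsHermitian) (hker : ∀ v, diagonal μ *ᵥ v = 0 → B *ᵥ v = 0) :
    ∀ᶠ s in 𝓝 (0 : ℝ), (diagonal μ + s • B).PosSemidef := by
  have hrow (k) (hk : μ k = 0) (j) : B k j = 0 := by
    have := congrFun (hker (Pi.single k 1) (by simp [hk])) j
    simpa [← hB.apply k j] using this
  have hsmall : ∀ᶠ s in 𝓝 (0 : ℝ), ∀ k, |s| * ∑ j, |B k j| ≤ μ k := by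
    refine eventually_all.2 fun k => ?_
    rcases (hμ k).eq_or_lt with hk | hk
    · simpa [hrow k hk.symm] using hμ k
    · have : Tendsto (fun s : ℝ => |s| * ∑ j, |B k j|) (𝓝 0) (𝓝 0) :=
        (by fun_prop : Continuous fun s : ℝ => |s| * ∑ j, |B k j|).tendsto' 0 0 (by simp)
      exact this.eventually (ge_mem_nhds hk)
  filter_upwards [hsmall] with s hs
  refine ((isHermitian_diagonal μ).add (hB.smul (.all s))).posSemidef_of_sum_row_le_diag
    fun k => ?_
  have hoff : ∑ j ∈ Finset.univ.erase k, |(diagonal μ + s • B) k j|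
      = |s| * ∑ j ∈ Finset.univ.erase k, |B k j| := by
    rw [Finset.mul_sum]
    refine Finset.sum_congr rfl fun j hj => ?_
    simp [diagonal_apply_ne _ (Finset.ne_of_mem_erase hj).symm, abs_mul]
  have hrow_sum := Finset.add_sum_erase Finset.univ (fun j => |B k j|) (Finset.mem_univ k)
  have hdiag : -(|s| * |B k k|) ≤ s * B k k := abs_mul s (B k k) ▸ neg_abs_le _
  rw [hoff, add_apply, diagonal_apply_eq, smul_apply, smul_eq_mul]
  nlinarith [hs k, abs_nonneg s]

theorem PosSemidef.eventually_add_smul {Λ B : Matrix ι ι ℝ} (hΛ : Λ.PosSemidef)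
    (hB : B.IsHermitian) (hker : ∀ v, Λ *ᵥ v = 0 → B *ᵥ v = 0) :
    ∀ᶠ s in 𝓝 (0 : ℝ), (Λ + s • B).PosSemidef := by
  set U : Matrix ι ι ℝ := ↑hΛ.1.eigenvectorUnitary
  have hUU : star U * U = 1 := Unitary.coe_star_mul_self _
  have hUU' : U * star U = 1 := Unitary.coe_mul_star_self _
  have hΛ' : Λ = U * diagonal hΛ.1.eigenvalues * star U := by
    simpa [Function.comp_def] using hΛ.1.spectral_theorem
  have hB' : B = U * (star U * B * U) * star U := by
    rw [← Matrix.mul_assoc, ← Matrix.mul_assoc, hUU', Matrix.one_mul, Matrix.mul_assoc, hUU',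
      Matrix.mul_one]
  have hdiag := eventually_posSemidef_diagonal_add_smul (fun k => hΛ.eigenvalues_nonneg k)
    (isHermitian_conjTranspose_mul_mul U hB) fun v hv => by
      have : Λ *ᵥ (U *ᵥ v) = 0 := by
        rw [hΛ', mulVec_mulVec, Matrix.mul_assoc, Matrix.mul_assoc, hUU, Matrix.mul_one,
          ← mulVec_mulVec, hv, mulVec_zero]
      simp [← mulVec_mulVec, hker _ this]
  filter_upwards [hdiag] with s hs
  rw [hΛ', hB']
  convert hs.mul_mul_conjTranspose_same U using 1
  simp [Matrix.mul_add, Matrix.add_mul, star_eq_conjTranspose]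

end Matrix

section Pencil

variable {g : ℕ} {D : Type*} [Fintype D] [DecidableEq D] {m : Type*} [Fintype m] [DecidableEq m]

theorem transpose_mul_LA_mul {k l : Type*} [Fintype k] [Fintype l] (A : Fin g → Matrix D D ℝ)
    (V : Matrix m k ℝ) (V' : Matrix m l ℝ) (W : Fin g → Matrix m m ℝ) :
    ((1 : Matrix D D ℝ) ⊗ₖ V)ᵀ * LA A W * ((1 : Matrix D D ℝ) ⊗ₖ V') =
      (1 : Matrix D D ℝ) ⊗ₖ (Vᵀ * V') - ∑ i, A i ⊗ₖ (Vᵀ * W i * V') := by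
  simp [LA, Matrix.mul_sub, Matrix.sub_mul, Matrix.mul_sum, Matrix.sum_mul,
    ← kroneckerMap_transpose, ← mul_kronecker_mul]

theorem LA_add_smul (A : Fin g → Matrix D D ℝ) (X β : Fin g → Matrix m m ℝ) (s : ℝ) :
    LA A (fun i => X i + s • β i) = LA A X - s • ∑ i, A i ⊗ₖ β i := by
  simp [LA, kronecker_add, kronecker_smul, Finset.sum_add_distrib, Finset.smul_sum,
    sub_add_eq_sub_sub]

theorem InDA.eventually_add_smul_of_fromBlocks {A : Fin g → Matrix D D ℝ}
    {X β γ : Fin g → Matrix m m ℝ} (hW : InDA A fun i => fromBlocks (X i) (β i) (β i) (γ i)) :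
    ∀ᶠ s in 𝓝 (0 : ℝ), InDA A fun i => X i + s • β i := by
  obtain ⟨hWsymm, hL⟩ := hW
  set L := LA A fun i => fromBlocks (X i) (β i) (β i) (γ i)
  set B := ∑ i, A i ⊗ₖ β i
  set J₁ : Matrix (D × (m ⊕ m)) (D × m) ℝ := 1 ⊗ₖ fromRows 1 0
  set J₂ : Matrix (D × (m ⊕ m)) (D × m) ℝ := 1 ⊗ₖ fromRows 0 1
  have hLX : J₁ᵀ * L * J₁ = LA A X := by
    rw [transpose_mul_LA_mul]
    simp [transpose_fromRows, fromCols_mul_fromBlocks, fromCols_mul_fromRows, LA]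
  have hL₂₁ : J₂ᵀ * L * J₁ = -B := by
    simp [J₁, J₂, L, B, transpose_mul_LA_mul, transpose_fromRows, fromCols_mul_fromBlocks,
      fromCols_mul_fromRows]
  have hL₁₂ : J₁ᵀ * L * J₂ = -B := by
    simp [J₁, J₂, L, B, transpose_mul_LA_mul, transpose_fromRows, fromCols_mul_fromBlocks,
      fromCols_mul_fromRows]
  have hB : (-B).IsHermitian := by
    rw [isHermitian_iff_isSymm, IsSymm, ← hL₂₁, transpose_mul, transpose_mul, transpose_transpose,
      (isHermitian_iff_isSymm.1 hL.1).eq, ← Matrix.mul_assoc, hL₁₂, hL₂₁]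
  have hΛ : (LA A X).PosSemidef := by
    simpa [hLX] using hL.conjTranspose_mul_mul_same J₁
  have hker (v) (hv : LA A X *ᵥ v = 0) : -B *ᵥ v = 0 := by
    have h := hL.mulVec_mulVec_eq_zero (P := J₁) (v := v) (by simpa [hLX] using hv)
    simpa only [mulVec_mulVec, ← Matrix.mul_assoc, hL₂₁, mulVec_zero] using congrArg (J₂ᵀ *ᵥ ·) h
  filter_upwards [hΛ.eventually_add_smul hB hker] with s hs
  have hblocks (i) := isSymm_fromBlocks_iff.1 (hWsymm i)
  refine ⟨fun i => (hblocks i).1.add (IsSymm.smul (hblocks i).2.1 s), ?_⟩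
  rwa [LA_add_smul, sub_eq_add_neg, ← smul_neg]

theorem InDA.mul_mul_transpose_add {k : Type*} [Fintype k] [DecidableEq k]
    {A : Fin g → Matrix D D ℝ} {Y Z : Fin g → Matrix k k ℝ} (hY : InDA A Y) (hZ : InDA A Z)
    {V₁ V₂ : Matrix m k ℝ} (hV : V₁ * V₁ᵀ + V₂ * V₂ᵀ = 1) :
    InDA A fun i => V₁ * Y i * V₁ᵀ + V₂ * Z i * V₂ᵀ := by
  refine ⟨fun i => ?_, ?_⟩
  · simp [IsSymm, transpose_mul, (hY.1 i).eq, (hZ.1 i).eq, Matrix.mul_assoc]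
  · have h := (hY.2.mul_mul_conjTranspose_same ((1 : Matrix D D ℝ) ⊗ₖ V₁)).add
      (hZ.2.mul_mul_conjTranspose_same ((1 : Matrix D D ℝ) ⊗ₖ V₂))
    have h₁ := transpose_mul_LA_mul A V₁ᵀ V₁ᵀ Y
    have h₂ := transpose_mul_LA_mul A V₂ᵀ V₂ᵀ Z
    simp only [conjTranspose_eq_transpose_of_trivial, ← kroneckerMap_transpose, transpose_one,
      transpose_transpose] at h h₁ h₂
    rw [h₁, h₂] at h
    convert h using 1
    rw [LA, ← one_kronecker_one (m := D), ← hV, kronecker_add]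
    simp only [kronecker_add, Finset.sum_add_distrib]
    abel

theorem InDA.fromBlocks_rotation {A : Fin g → Matrix D D ℝ} {Y Z : Fin g → Matrix m m ℝ}
    (hY : InDA A Y) (hZ : InDA A Z) {c s : ℝ} (hcs : c ^ 2 + s ^ 2 = 1) :
    InDA A fun i => fromBlocks (c ^ 2 • Y i + s ^ 2 • Z i) ((c * s) • (Y i - Z i))
      ((c * s) • (Y i - Z i)) (s ^ 2 • Y i + c ^ 2 • Z i) := by
  let V (a b : ℝ) : Matrix (m ⊕ m) m ℝ := fromRows (a • 1) (b • 1)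
  have hconj (a b : ℝ) (M : Matrix m m ℝ) : V a b * M * (V a b)ᵀ =
      fromBlocks ((a * a) • M) ((a * b) • M) ((b * a) • M) ((b * b) • M) :=
    fromRows_smul_one_mul_mul_transpose a b M
  have hV : V c s * (V c s)ᵀ + V s (-c) * (V s (-c))ᵀ = 1 := by
    have h₁ := hconj c s 1
    have h₂ := hconj s (-c) 1
    rw [Matrix.mul_one] at h₁ h₂
    rw [h₁, h₂, fromBlocks_add, ← fromBlocks_one]
    congr 1
    · linear_combination (norm := module) hcs • (1 : Matrix m m ℝ)
    · module
    · module
    · linear_combination (norm := module) hcs • (1 : Matrix m m ℝ)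
  convert hY.mul_mul_transpose_add hZ hV using 2 with i
  rw [hconj, hconj, fromBlocks_add]
  congr 1 <;> module

end Pencil

theorem IsEucExt.eq_zero_of_eventually_add_smul {g d n : ℕ} {A : Fin g → Matrix (Fin d) (Fin d) ℝ}
    {X β : Fin g → Matrix (Fin n) (Fin n) ℝ} (hX : IsEucExt A X)
    (h : ∀ᶠ s in 𝓝 (0 : ℝ), InDA A fun i => X i + s • β i) : β = 0 := by
  have hneg := (continuous_neg.tendsto' (0 : ℝ) 0 neg_zero).eventually h
  obtain ⟨t, ⟨hp, hm⟩, ht⟩ :=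
    (((h.and hneg).filter_mono nhdsWithin_le_nhds).and (self_mem_nhdsWithin (s := {0}ᶜ))).exists
  have hmid : X = fun i => (1 / 2 : ℝ) • (X i + t • β i) + (1 - 1 / 2 : ℝ) • (X i + -t • β i) := by
    funext i
    module
  funext i
  have := congrFun (hX.2 _ _ _ hp hm (by norm_num) (by norm_num) hmid).1 i
  simpa [show t ≠ 0 from ht] using this

theorem euclidean_extreme_iff_dilation_general {g d n : ℕ}
    (A : Fin g → Matrix (Fin d) (Fin d) ℝ)
    (X : Fin g → Matrix (Fin n) (Fin n) ℝ) (hX : InDA A X) :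
    IsEucExt A X ↔
      ∀ β : Fin g → Matrix (Fin n) (Fin n) ℝ, (∀ i, (β i).IsSymm) →
        (∃ γ : Fin g → Matrix (Fin n) (Fin n) ℝ, (∀ i, (γ i).IsSymm) ∧
          InDA A (fun i => Matrix.fromBlocks (X i) (β i) (β i) (γ i))) →
        β = 0 := by
  refine ⟨fun hext β _ ⟨γ, _, hW⟩ => hext.eq_zero_of_eventually_add_smul
    hW.eventually_add_smul_of_fromBlocks, fun h => ⟨hX, fun Y Z t hY hZ ht₀ ht₁ hXYZ => ?_⟩⟩
  set c := √t
  set s := √(1 - t)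
  have hc : c ^ 2 = t := Real.sq_sqrt ht₀.le
  have hs : s ^ 2 = 1 - t := Real.sq_sqrt (by linarith)
  have hcs : c * s ≠ 0 := by positivity
  have hW := hY.fromBlocks_rotation hZ (c := c) (s := s) (by rw [hc, hs]; ring)
  simp only [hc, hs, ← congrFun hXYZ] at hW
  have hβ := h _ (fun i => ((hY.1 i).sub (hZ.1 i)).smul _)
    ⟨_, fun i => ((hY.1 i).smul _).add ((hZ.1 i).smul _), hW⟩
  have hYZ : Y = Z := funext fun i => by
    simpa [hcs, sub_eq_zero] using congrFun hβ i
  subst hYZ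
  have hXY : X = Y := by
    rw [hXYZ]
    funext i
    module
  exact ⟨hXY.symm, hXY.symm⟩

/-- `X ∈ D_A(n)` is a Euclidean extreme point iff the only symmetric
tuple `β` with `[[X,β],[β,γ]] ∈ D_A(2n)` for some symmetric `γ` is `β = 0`. -/
theorem euclidean_extreme_iff_dilation {g d n : ℕ}
    (A : Fin g → Matrix (Fin d) (Fin d) ℝ) (hA : ∀ i, (A i).IsSymm)
    (X : Fin g → Matrix (Fin n) (Fin n) ℝ) (hX : InDA A X) :
    IsEucExt A X ↔
      ∀ β : Fin g → Matrix (Fin n) (Fin n) ℝ, (∀ i, (β i).IsSymm) →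
        (∃ γ : Fin g → Matrix (Fin n) (Fin n) ℝ, (∀ i, (γ i).IsSymm) ∧
          InDA A (fun i => Matrix.fromBlocks (X i) (β i) (β i) (γ i))) →
        β = 0 :=
  euclidean_extreme_iff_dilation_general A X hX
end

section
/- A free spectrahedron D_A is bounded (i.e., there is C > 0 with C·I_n - Σ_i X_i^2 ⪰ 0 for all X ∈ D_A(n) and all n) if and only if its first level D_A(1) ⊆ ℝ^g is a bounded subset of ℝ^g. -/
/-!
Compressing `X ∈ D_A(m)` by a unit vector `v`, i.e. conjugating `L_A(X)` by `I ⊗ v`, lands in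
`D_A(1)`; so a bound `R` on the first level bounds every numerical value `vᵀ Xᵢ v`, whence
`-R ≤ Xᵢ ≤ R` and `Xᵢ² ≤ R²` in the Loewner order, and `Σ Xᵢ² ≤ g R²`. Conversely, scalar
tuples `x • 1` form the first level of `D_A`, where `C - Σ xᵢ² ≥ 0` bounds `x`.
-/

open Matrix
open scoped Kronecker

theorem kronecker_one_fin_one {l R : Type*} [MulZeroOneClass R] (M : Matrix l l R) :
    M ⊗ₖ (1 : Matrix (Fin 1) (Fin 1) R) = M.submatrix Prod.fst Prod.fst := by
  ext ⟨a, i⟩ ⟨b, j⟩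
  simp [Subsingleton.elim i j]

theorem replicateCol_conjTranspose_mul_mul_replicateCol_apply {n : Type*} [Fintype n]
    (X : Matrix n n ℝ) (u : n → ℝ) (a b : Fin 1) :
    ((replicateCol (Fin 1) u)ᴴ * X * replicateCol (Fin 1) u) a b = u ⬝ᵥ X *ᵥ u := by
  simp only [mul_apply, conjTranspose_apply, replicateCol_apply, star_trivial, dotProduct,
    mulVec, Finset.mul_sum, Finset.sum_mul, mul_assoc]
  exact Finset.sum_comm

theorem posSemidef_smul_one_sub_iff {n : Type*} [Fintype n] [DecidableEq n]
    {X : Matrix n n ℝ} (hX : X.IsSymm) (N : ℝ) :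
    (N • 1 - X).PosSemidef ↔ ∀ v, v ⬝ᵥ X *ᵥ v ≤ N * (v ⬝ᵥ v) := by
  have hH : (N • 1 - X).IsHermitian := isHermitian_iff_isSymm.2 (by simp [IsSymm, hX.eq])
  rw [posSemidef_iff_dotProduct_mulVec, and_iff_right hH]
  simp [sub_mulVec, smul_mulVec]

theorem posSemidef_sq_smul_one_sub_mul_self {n : Type*} [Fintype n] [DecidableEq n]
    {X : Matrix n n ℝ} {N : ℝ} (hN : 0 < N)
    (hle : (N • 1 - X).PosSemidef) (hge : (N • 1 + X).PosSemidef) :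
    (N ^ 2 • 1 - X * X).PosSemidef := by
  -- `N + X` and `N - X` commute, and each summand below is a congruence of a PSD matrix.
  have key : N ^ 2 • 1 - X * X = (2 * N)⁻¹ • ((N • 1 - X)ᴴ * (N • 1 + X) * (N • 1 - X) +
      (N • 1 + X)ᴴ * (N • 1 - X) * (N • 1 + X)) := by
    rw [hle.isHermitian.eq, hge.isHermitian.eq]
    simp only [Matrix.mul_add, Matrix.add_mul, Matrix.mul_sub, Matrix.sub_mul, Matrix.smul_mul,
      Matrix.mul_smul, Matrix.one_mul, Matrix.mul_one]
    match_scalars <;> field_simp <;> ring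
  rw [key]
  exact ((hge.conjTranspose_mul_mul_same _).add (hle.conjTranspose_mul_mul_same _)).smul
    (by positivity)

theorem posSemidef_sq_smul_one_sub_mul_self_of_abs_le {n : Type*} [Fintype n] [DecidableEq n]
    {X : Matrix n n ℝ} (hX : X.IsSymm) {N : ℝ} (hN : 0 < N)
    (h : ∀ v, |v ⬝ᵥ X *ᵥ v| ≤ N * (v ⬝ᵥ v)) :
    (N ^ 2 • 1 - X * X).PosSemidef := by
  refine posSemidef_sq_smul_one_sub_mul_self hN ((posSemidef_smul_one_sub_iff hX N).2
    fun v => (le_abs_self _).trans (h v)) ?_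
  have hX' : (-X).IsSymm := by simpa [IsSymm] using hX.eq
  simpa using (posSemidef_smul_one_sub_iff hX' N).2 fun v => by
    simpa [neg_mulVec] using (neg_le_abs _).trans (h v)

variable {g : ℕ} {D m k : Type*} [Fintype D] [Fintype m] [Fintype k]
  [DecidableEq D] [DecidableEq m] [DecidableEq k]

theorem LA_compress_isometry (A : Fin g → Matrix D D ℝ) (X : Fin g → Matrix m m ℝ)
    {V : Matrix m k ℝ} (hV : Vᴴ * V = 1) :
    ((1 : Matrix D D ℝ) ⊗ₖ V)ᴴ * LA A X * ((1 : Matrix D D ℝ) ⊗ₖ V) =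
      LA A (fun i => Vᴴ * X i * V) := by
  simp only [LA, Matrix.mul_sub, Matrix.sub_mul, Matrix.mul_sum, Matrix.sum_mul,
    conjTranspose_kronecker, conjTranspose_one, Matrix.mul_one, ← mul_kronecker_mul,
    Matrix.one_mul, hV, one_kronecker_one]

theorem InDA.isometry_compress {A : Fin g → Matrix D D ℝ} {X : Fin g → Matrix m m ℝ}
    (hX : InDA A X) {V : Matrix m k ℝ} (hV : Vᴴ * V = 1) :
    InDA A (fun i => Vᴴ * X i * V) := by
  refine ⟨fun i => ?_, LA_compress_isometry A X hV ▸ hX.2.conjTranspose_mul_mul_same _⟩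
  simp [IsSymm, transpose_mul, (hX.1 i).eq, conjTranspose_eq_transpose_of_trivial,
    Matrix.mul_assoc]

theorem inDA_fin_one_iff (A : Fin g → Matrix D D ℝ) (Y : Fin g → Matrix (Fin 1) (Fin 1) ℝ) :
    InDA A Y ↔ (1 - ∑ i, Y i 0 0 • A i).PosSemidef := by
  have hY : Y = fun i => Y i 0 0 • 1 := by
    ext i a b; simp [Subsingleton.elim a 0, Subsingleton.elim b 0]
  have hLA : LA A Y = (1 - ∑ i, Y i 0 0 • A i) ⊗ₖ (1 : Matrix (Fin 1) (Fin 1) ℝ) := by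
    rw [hY]; ext ⟨a, i⟩ ⟨b, j⟩
    simp [LA, Subsingleton.elim i j, Matrix.sum_apply, Matrix.one_apply, mul_comm]
  refine ⟨fun h => ?_, fun h => ⟨fun i => ?_, ?_⟩⟩
  · have h' := h.2.submatrix (fun a : D => (a, (0 : Fin 1)))
    rw [hLA, kronecker_one_fin_one, submatrix_submatrix] at h'
    exact h'
  · rw [hY]; simp [IsSymm]
  · rw [hLA, kronecker_one_fin_one]; exact h.submatrix _

theorem InDA.abs_dotProduct_mulVec_le {A : Fin g → Matrix D D ℝ} {X : Fin g → Matrix m m ℝ}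
    (hX : InDA A X) {R : ℝ}
    (hR : ∀ x : Fin g → ℝ, (1 - ∑ i, x i • A i).PosSemidef → ‖x‖ ≤ R) (i : Fin g) (v : m → ℝ) :
    |v ⬝ᵥ X i *ᵥ v| ≤ R * (v ⬝ᵥ v) := by
  rcases eq_or_ne v 0 with rfl | hv
  · simp
  have hs : 0 < v ⬝ᵥ v := by simpa using dotProduct_self_star_pos_iff.2 hv
  set u := (√(v ⬝ᵥ v))⁻¹ • v
  have hu : u ⬝ᵥ u = 1 := by
    simp only [u, dotProduct_smul, smul_dotProduct, smul_eq_mul, ← mul_assoc, ← mul_inv,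
      Real.mul_self_sqrt hs.le, inv_mul_cancel₀ hs.ne']
  have hV : (replicateCol (Fin 1) u)ᴴ * replicateCol (Fin 1) u = 1 := by
    ext a b
    rw [Subsingleton.elim a b, one_apply_eq, ← hu, ← Matrix.mul_one (replicateCol (Fin 1) u)ᴴ,
      replicateCol_conjTranspose_mul_mul_replicateCol_apply, one_mulVec]
  have hx := (norm_le_pi_norm _ i).trans
    (hR _ ((inDA_fin_one_iff A _).1 (hX.isometry_compress hV)))
  simp only [replicateCol_conjTranspose_mul_mul_replicateCol_apply, u, mulVec_smul,
    dotProduct_smul, smul_dotProduct, smul_eq_mul, ← mul_assoc, ← mul_inv,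
    Real.mul_self_sqrt hs.le, norm_mul, norm_inv, Real.norm_of_nonneg hs.le,
    Real.norm_eq_abs] at hx
  rwa [inv_mul_le_iff₀ hs, mul_comm] at hx

theorem InDA.posSemidef_smul_one_sub_sum_mul_self {A : Fin g → Matrix D D ℝ}
    {X : Fin g → Matrix m m ℝ} (hX : InDA A X) {R : ℝ} (hR₀ : 0 < R)
    (hR : ∀ x : Fin g → ℝ, (1 - ∑ i, x i • A i).PosSemidef → ‖x‖ ≤ R) :
    ((g * R ^ 2 + 1) • 1 - ∑ i, X i * X i).PosSemidef := by
  have hsplit : (g * R ^ 2 + 1) • (1 : Matrix m m ℝ) - ∑ i, X i * X i =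
      1 + ∑ i, (R ^ 2 • 1 - X i * X i) := by
    rw [Finset.sum_sub_distrib, Finset.sum_const, Finset.card_univ, Fintype.card_fin]
    module
  rw [hsplit]
  exact PosSemidef.one.add <| posSemidef_sum _ fun i _ =>
    posSemidef_sq_smul_one_sub_mul_self_of_abs_le (hX.1 i) hR₀ (hX.abs_dotProduct_mulVec_le hR i)

theorem norm_le_sqrt_of_forall_inDA_fin_one {A : Fin g → Matrix D D ℝ} {C : ℝ}
    (hC : ∀ X : Fin g → Matrix (Fin 1) (Fin 1) ℝ, InDA A X →
      (C • 1 - ∑ i, X i * X i).PosSemidef)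
    {x : Fin g → ℝ} (hx : (1 - ∑ i, x i • A i).PosSemidef) : ‖x‖ ≤ √C := by
  have hX : InDA A (fun i => x i • (1 : Matrix (Fin 1) (Fin 1) ℝ)) :=
    (inDA_fin_one_iff A _).2 (by simpa using hx)
  have h00 := (hC _ hX).diag_nonneg (i := 0)
  simp only [Algebra.mul_smul_comm, mul_one, Matrix.sub_apply, Matrix.smul_apply, one_apply_eq,
    smul_eq_mul, Matrix.sum_apply, sub_nonneg] at h00
  refine (pi_norm_le_iff_of_nonneg (Real.sqrt_nonneg C)).2 fun i => ?_
  rw [Real.norm_eq_abs]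
  exact Real.abs_le_sqrt <| (Finset.single_le_sum (fun j _ => sq_nonneg (x j))
    (Finset.mem_univ i)).trans (by simpa [sq] using h00)

theorem free_spectrahedron_bounded_iff_level_one_general {g d : ℕ}
    (A : Fin g → Matrix (Fin d) (Fin d) ℝ) :
    (∃ C : ℝ, 0 < C ∧ ∀ (m : ℕ) (X : Fin g → Matrix (Fin m) (Fin m) ℝ), InDA A X →
      (C • (1 : Matrix (Fin m) (Fin m) ℝ) - ∑ i, X i * X i).PosSemidef) ↔
    Bornology.IsBounded
      {x : Fin g → ℝ | ((1 : Matrix (Fin d) (Fin d) ℝ) - ∑ i, x i • A i).PosSemidef} := by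
  constructor
  · rintro ⟨C, -, hC⟩
    exact isBounded_iff_forall_norm_le.2
      ⟨√C, fun _ => norm_le_sqrt_of_forall_inDA_fin_one (hC 1)⟩
  · intro hB
    obtain ⟨R, hR₀, hR⟩ := hB.exists_pos_norm_le
    exact ⟨g * R ^ 2 + 1, by positivity,
      fun _ _ hX => hX.posSemidef_smul_one_sub_sum_mul_self hR₀ hR⟩

/-- a free spectrahedron is bounded iff its first level is a bounded
subset of `ℝ^g`. -/
theorem free_spectrahedron_bounded_iff_level_one {g d : ℕ}
    (A : Fin g → Matrix (Fin d) (Fin d) ℝ) (hA : ∀ i, (A i).IsSymm) :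
    (∃ C : ℝ, 0 < C ∧ ∀ (m : ℕ) (X : Fin g → Matrix (Fin m) (Fin m) ℝ), InDA A X →
      (C • (1 : Matrix (Fin m) (Fin m) ℝ) - ∑ i, X i * X i).PosSemidef) ↔
    Bornology.IsBounded
      {x : Fin g → ℝ | ((1 : Matrix (Fin d) (Fin d) ℝ) - ∑ i, x i • A i).PosSemidef} :=
  free_spectrahedron_bounded_iff_level_one_general A
end

section
/- Let A be a g-tuple of d×d real symmetric matrices with D_A bounded, let X ∈ D_A(n), and suppose X is not an Arveson extreme point of D_A. Then there exists a maximal 1-dilation of X: a nonzero β ∈ M_{n×1}(ℝ)^g with ker L_A(X) ⊆ ker Λ_A(β^T), a real c which maximizes α subject to the dilation [[X, αβ],[αβ^T, γ]] ∈ D_A(n+1) for some γ ∈ ℝ^g, and the maximum c is attained and strictly positive. -/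
open Matrix
open scoped Kronecker

/-!
Non-extremality of `X` gives a dilation `[[X, β₀], [β₀ᵀ, γ₀]] ∈ D_A` with `β₀ ≠ 0`; compressing
to a column `j` of `β₀` that is nonzero yields a 1-dilation with `α = 1`. For any admissible
`α ≠ 0`, a vector `v ∈ ker L_A(X)` extended by zero has vanishing quadratic form against the
positive semidefinite `L_A` of the dilation, hence lies in its kernel, and the last block row
then reads `α Λ_A(βᵀ) v = 0`. The admissible pairs `(α, γ)` form a closed set, and the last
diagonal entry of `C - Σ Zᵢ²` gives `α² ‖β‖² + ‖γ‖² ≤ C`, so the set is compact and `α` attains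
its maximum there, which is at least `1`.
-/

namespace Matrix

variable {n : Type*} [Fintype n]

theorem isClosed_setOf_posSemidef : IsClosed {M : Matrix n n ℝ | M.PosSemidef} := by
  have hset : {M : Matrix n n ℝ | M.PosSemidef}
      = {M | Mᴴ = M} ∩ ⋂ x : n → ℝ, {M | 0 ≤ star x ⬝ᵥ (M *ᵥ x)} := by
    ext M
    simp only [Set.mem_ofPred_eq, Set.mem_inter_iff, Set.mem_iInter,
      posSemidef_iff_dotProduct_mulVec, IsHermitian]
  rw [hset]
  exact (isClosed_eq (continuous_id.matrix_conjTranspose) continuous_id).inter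
    (isClosed_iInter fun x => isClosed_le continuous_const
      (continuous_const.dotProduct (continuous_id.matrix_mulVec continuous_const)))

theorem PosSemidef.mulVec_eq_zero_of_forall {M : Matrix n n ℝ} (hM : M.PosSemidef)
    {w : n → ℝ} (hw : ∀ j, w j = 0 ∨ (M *ᵥ w) j = 0) : M *ᵥ w = 0 := by
  refine (hM.dotProduct_mulVec_zero_iff w).mp (Finset.sum_eq_zero fun j _ => ?_)
  rcases hw j with h | h <;> simp [h]

end Matrix

section FreeSpectrahedron

variable {g : ℕ} {D m m' : Type*} [Fintype D] [Fintype m] [Fintype m']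
  [DecidableEq D] [DecidableEq m] [DecidableEq m'] (A : Fin g → Matrix D D ℝ)

def DABoundedBy (C : ℝ) : Prop :=
  ∀ (k : ℕ) (Z : Fin g → Matrix (Fin k) (Fin k) ℝ),
    InDA A Z → (C • (1 : Matrix (Fin k) (Fin k) ℝ) - ∑ i, Z i * Z i).PosSemidef

theorem continuous_LA : Continuous (LA A : (Fin g → Matrix m m ℝ) → _) := by
  refine continuous_const.sub (continuous_finsetSum _ fun i _ => continuous_matrix fun p q => ?_)
  simp only [kroneckerMap_apply]
  fun_prop

theorem isClosed_setOf_InDA : IsClosed {Z : Fin g → Matrix m m ℝ | InDA A Z} := by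
  have hset : {Z : Fin g → Matrix m m ℝ | InDA A Z}
      = (⋂ i, {Z | (Z i)ᵀ = Z i}) ∩ LA A ⁻¹' {M | M.PosSemidef} := by
    ext Z
    simp [InDA, IsSymm]
  rw [hset]
  exact (isClosed_iInter fun i => isClosed_eq (continuous_apply i).matrix_transpose
    (continuous_apply i)).inter (isClosed_setOf_posSemidef.preimage (continuous_LA A))

theorem LA_submatrix (Z : Fin g → Matrix m m ℝ) {f : m' → m} (hf : Function.Injective f) :
    LA A (fun i => (Z i).submatrix f f)
      = (LA A Z).submatrix (Prod.map id f) (Prod.map id f) := by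
  ext ⟨p, x⟩ ⟨q, y⟩
  simp [LA, Matrix.sub_apply, Matrix.sum_apply, one_apply, Prod.ext_iff, hf.eq_iff]

variable {A}

theorem InDA.submatrix {Z : Fin g → Matrix m m ℝ} (hZ : InDA A Z) {f : m' → m}
    (hf : Function.Injective f) : InDA A (fun i => (Z i).submatrix f f) :=
  ⟨fun i => (hZ.1 i).submatrix f, LA_submatrix A Z hf ▸ hZ.2.submatrix _⟩

theorem InDA.sum_sq_le {C : ℝ} (hC : DABoundedBy A C) {Z : Fin g → Matrix m m ℝ}
    (hZ : InDA A Z) (j : m) : ∑ i, ∑ k, Z i j k ^ 2 ≤ C := by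
  set e := Fintype.equivFin m
  have hdiag := (hC _ _ (hZ.submatrix e.symm.injective)).diag_nonneg (i := e j)
  have hentry : ∀ i, (Z i * Z i) j j = ∑ k, Z i j k ^ 2 := fun i => by
    simp only [mul_apply, sq]
    exact Finset.sum_congr rfl fun k _ => by rw [(hZ.1 i).apply j k]
  simpa [Matrix.sub_apply, Matrix.sum_apply, submatrix_mul_equiv, hentry] using hdiag

end FreeSpectrahedron

section OneDilation

variable {g : ℕ} {D m : Type*}

noncomputable def oneDilation (X : Fin g → Matrix m m ℝ) (β : Fin g → Matrix m (Fin 1) ℝ)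
    (α : ℝ) (γ : Fin g → ℝ) : Fin g → Matrix (m ⊕ Fin 1) (m ⊕ Fin 1) ℝ :=
  fun i => fromBlocks (X i) (α • β i) (α • β i)ᵀ (γ i • 1)

variable {X : Fin g → Matrix m m ℝ} {β : Fin g → Matrix m (Fin 1) ℝ}

theorem continuous_oneDilation :
    Continuous fun p : ℝ × (Fin g → ℝ) => oneDilation X β p.1 p.2 := by
  refine continuous_pi fun i => Continuous.matrix_fromBlocks continuous_const ?_ ?_ ?_
  · fun_prop
  · exact (by fun_prop : Continuous fun p : ℝ × (Fin g → ℝ) => p.1 • β i).matrix_transpose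
  · fun_prop

variable [Fintype D] [Fintype m] [DecidableEq D] [DecidableEq m] {A : Fin g → Matrix D D ℝ}

theorem InDA.oneDilation_column {k : Type*} [Fintype k] [DecidableEq k]
    {β : Fin g → Matrix m k ℝ} {γ : Fin g → Matrix k k ℝ}
    (h : InDA A fun i => fromBlocks (X i) (β i) (β i)ᵀ (γ i)) (j : k) :
    InDA A (oneDilation X (fun i => (β i).submatrix id fun _ => j) 1 fun i => γ i j j) := by
  have hinj : Function.Injective (Sum.map (id : m → m) fun _ : Fin 1 => j) :=
    Sum.map_injective.mpr ⟨Function.injective_id, Function.injective_of_subsingleton _⟩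
  convert h.submatrix hinj using 1
  funext i
  ext (x | x) (y | y) <;> simp [oneDilation, one_apply, Fin.fin_one_eq_zero]

theorem InDA.sq_mul_sum_sq_add_sum_sq_le {C : ℝ} (hC : DABoundedBy A C) {α : ℝ}
    {γ : Fin g → ℝ} (h : InDA A (oneDilation X β α γ)) :
    α ^ 2 * ∑ i, ∑ r, β i r 0 ^ 2 + ∑ i, γ i ^ 2 ≤ C := by
  simpa [oneDilation, Fintype.sum_sum_type, mul_pow, Finset.mul_sum, Finset.sum_add_distrib]
    using h.sum_sq_le hC (Sum.inr 0)

theorem isCompact_setOf_InDA_oneDilation {C : ℝ} (hC : DABoundedBy A C) (hβ : β ≠ 0) :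
    IsCompact {p : ℝ × (Fin g → ℝ) | InDA A (oneDilation X β p.1 p.2)} := by
  set s := ∑ i, ∑ r, β i r 0 ^ 2
  have hs : 0 < s := by
    refine (by positivity : 0 ≤ s).lt_of_ne fun hs => hβ ?_
    have h0 := (Fintype.sum_eq_zero_iff_of_nonneg fun _ => by positivity).mp hs.symm
    funext i
    ext r t
    have := congrFun ((Fintype.sum_eq_zero_iff_of_nonneg fun _ => by positivity).mp
      (congrFun h0 i)) r
    simpa [Fin.fin_one_eq_zero t] using this
  refine Metric.isCompact_of_isClosed_isBounded
    ((isClosed_setOf_InDA A).preimage continuous_oneDilation)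
    ((Metric.isBounded_iff_subset_closedBall 0).mpr ⟨max √(C / s) √C, fun p hp => ?_⟩)
  have hbound := hp.sq_mul_sum_sq_add_sum_sq_le hC
  have hγ : ∀ i, p.2 i ^ 2 ≤ C := fun i => by
    have := Finset.single_le_sum (fun j _ => sq_nonneg (p.2 j)) (Finset.mem_univ i)
    nlinarith [sq_nonneg p.1]
  rw [mem_closedBall_zero_iff, Prod.norm_def, max_le_iff]
  constructor
  · refine (Real.abs_le_sqrt ?_).trans (le_max_left _ _)
    rw [le_div_iff₀ hs]
    nlinarith [Finset.sum_nonneg fun i (_ : i ∈ Finset.univ) => sq_nonneg (p.2 i)]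
  · refine (pi_norm_le_iff_of_nonneg (by positivity)).mpr fun i => ?_
    exact (Real.abs_le_sqrt (hγ i)).trans (le_max_right _ _)

theorem mulVec_LA_oneDilation_inl {α : ℝ} {γ : Fin g → ℝ} (v : D × m → ℝ) (q : D) (r : m) :
    (LA A (oneDilation X β α γ) *ᵥ fun p => Sum.elim (fun r => v (p.1, r)) 0 p.2) (q, .inl r)
      = (LA A X *ᵥ v) (q, r) := by
  simp [LA, mulVec, dotProduct, Fintype.sum_prod_type, oneDilation, Matrix.sub_apply,
    Matrix.sum_apply, one_apply]

theorem mulVec_LA_oneDilation_inr {α : ℝ} {γ : Fin g → ℝ} (v : D × m → ℝ) (q : D) (t : Fin 1) :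
    (LA A (oneDilation X β α γ) *ᵥ fun p => Sum.elim (fun r => v (p.1, r)) 0 p.2) (q, .inr t)
      = -(α * ((∑ i, A i ⊗ₖ (β i)ᵀ) *ᵥ v) (q, t)) := by
  simp [LA, mulVec, dotProduct, Fintype.sum_prod_type, oneDilation, Matrix.sub_apply,
    Matrix.sum_apply, one_apply, Finset.mul_sum, Finset.sum_mul, mul_left_comm, mul_assoc]

theorem InDA.ker_LA_le_ker_of_oneDilation {α : ℝ} {γ : Fin g → ℝ} (hα : α ≠ 0)
    (h : InDA A (oneDilation X β α γ)) :
    LinearMap.ker (LA A X).mulVecLin ≤ LinearMap.ker (∑ i, A i ⊗ₖ (β i)ᵀ).mulVecLin := by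
  intro v hv
  rw [LinearMap.mem_ker, mulVecLin_apply] at hv ⊢
  have hzero := h.2.mulVec_eq_zero_of_forall
    (w := fun p => Sum.elim (fun r => v (p.1, r)) 0 p.2) fun
      | (q, .inl r) => .inr (by rw [mulVec_LA_oneDilation_inl, hv, Pi.zero_apply])
      | (_, .inr _) => .inl rfl
  funext ⟨q, t⟩
  simpa [mulVec_LA_oneDilation_inr, hα] using congrFun hzero (q, .inr t)

end OneDilation

theorem maximal_one_dilation_exists_general {g d n : ℕ}
    (A : Fin g → Matrix (Fin d) (Fin d) ℝ)
    (hbdd : ∃ C : ℝ, 0 < C ∧ ∀ (m : ℕ) (Z : Fin g → Matrix (Fin m) (Fin m) ℝ),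
      InDA A Z → (C • (1 : Matrix (Fin m) (Fin m) ℝ) - ∑ i, Z i * Z i).PosSemidef)
    (X : Fin g → Matrix (Fin n) (Fin n) ℝ) (hX : InDA A X)
    (hnotArv : ¬ IsArvExt A X) :
    ∃ β : Fin g → Matrix (Fin n) (Fin 1) ℝ, β ≠ 0 ∧
      LinearMap.ker (LA A X).mulVecLin ≤
        LinearMap.ker (∑ i, A i ⊗ₖ (β i)ᵀ).mulVecLin ∧
      ∃ c : ℝ, 0 < c ∧
        (∃ γ : Fin g → ℝ, InDA A (fun i => Matrix.fromBlocks (X i) (c • β i)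
          (c • β i)ᵀ (γ i • (1 : Matrix (Fin 1) (Fin 1) ℝ)))) ∧
        ∀ α : ℝ, (∃ γ : Fin g → ℝ, InDA A (fun i => Matrix.fromBlocks (X i) (α • β i)
          (α • β i)ᵀ (γ i • (1 : Matrix (Fin 1) (Fin 1) ℝ)))) → α ≤ c := by
  obtain ⟨C, -, hC⟩ := hbdd
  obtain ⟨k, β₀, γ₀, hdil, hβ₀⟩ : ∃ (k : ℕ) (β₀ : Fin g → Matrix (Fin n) (Fin k) ℝ)
      (γ₀ : Fin g → Matrix (Fin k) (Fin k) ℝ),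
      InDA A (fun i => fromBlocks (X i) (β₀ i) (β₀ i)ᵀ (γ₀ i)) ∧ β₀ ≠ 0 := by
    simpa [IsArvExt, hX] using hnotArv
  obtain ⟨i, r, j, hne⟩ : ∃ i r j, β₀ i r j ≠ 0 := by
    by_contra! h
    exact hβ₀ (funext fun i => Matrix.ext (h i))
  set β : Fin g → Matrix (Fin n) (Fin 1) ℝ := fun i => (β₀ i).submatrix id fun _ => j
  have hβ : β ≠ 0 := fun h => hne (by simpa [β] using congrFun (congrFun (congrFun h i) r) 0)
  have h₁ := hdil.oneDilation_column j
  obtain ⟨p, hp, hmax⟩ := (isCompact_setOf_InDA_oneDilation hC hβ).exists_isMaxOn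
    ⟨(1, _), h₁⟩ continuous_fst.continuousOn
  exact ⟨β, hβ, h₁.ker_LA_le_ker_of_oneDilation one_ne_zero, p.1,
    one_pos.trans_le (hmax (a := (1, _)) h₁), ⟨p.2, hp⟩, fun α ⟨γ, hγ⟩ => hmax (a := (α, γ)) hγ⟩

/-- if `D_A` is bounded and `X ∈ D_A(n)` is not Arveson extreme, a
maximal 1-dilation of `X` exists: a nonzero `β` with `ker L_A(X) ⊆ ker Λ_A(βᵀ)` and a
strictly positive `c` attaining the maximum of all `α` admitting a dilation
`[[X, αβ],[αβᵀ, γ]] ∈ D_A(n+1)`. -/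
theorem maximal_one_dilation_exists {g d n : ℕ}
    (A : Fin g → Matrix (Fin d) (Fin d) ℝ) (hA : ∀ i, (A i).IsSymm)
    (hbdd : ∃ C : ℝ, 0 < C ∧ ∀ (m : ℕ) (Z : Fin g → Matrix (Fin m) (Fin m) ℝ),
      InDA A Z → (C • (1 : Matrix (Fin m) (Fin m) ℝ) - ∑ i, Z i * Z i).PosSemidef)
    (X : Fin g → Matrix (Fin n) (Fin n) ℝ) (hX : InDA A X)
    (hnotArv : ¬ IsArvExt A X) :
    ∃ β : Fin g → Matrix (Fin n) (Fin 1) ℝ, β ≠ 0 ∧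
      LinearMap.ker (LA A X).mulVecLin ≤
        LinearMap.ker (∑ i, A i ⊗ₖ (β i)ᵀ).mulVecLin ∧
      ∃ c : ℝ, 0 < c ∧
        (∃ γ : Fin g → ℝ, InDA A (fun i => Matrix.fromBlocks (X i) (c • β i)
          (c • β i)ᵀ (γ i • (1 : Matrix (Fin 1) (Fin 1) ℝ)))) ∧
        ∀ α : ℝ, (∃ γ : Fin g → ℝ, InDA A (fun i => Matrix.fromBlocks (X i) (α • β i)
          (α • β i)ᵀ (γ i • (1 : Matrix (Fin 1) (Fin 1) ℝ)))) → α ≤ c :=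
  maximal_one_dilation_exists_general A hbdd X hX hnotArv
end

section
/- Let X ∈ D_A(n) where D_A is a free spectrahedron, suppose Y ∈ D_A(n+k) is an Arveson extreme dilation of X (i.e., the top-left n×n block of Y is X), and suppose U is an orthogonal matrix with U^T Y U = ⊕_{i=1}^ℓ Z^i where each Z^i is irreducible. Then each Z^i is a free extreme point of D_A, and X is a matrix convex combination of the Z^i: there exist matrices V_i with X = Σ_i V_i^T Z^i V_i and Σ_i V_i^T V_i = I_n, and the sum of the sizes of the Z^i equals n+k. -/
open Matrix
open scoped Kronecker

/-- The orthogonal complement of a subspace of `m → ℝ` with respect to the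
standard dot product. -/
def perpSpace {m : Type*} [Fintype m] (N : Submodule ℝ (m → ℝ)) :
    Submodule ℝ (m → ℝ) where
  carrier := {v | ∀ w ∈ N, dotProduct v w = 0}
  zero_mem' := by intro w hw; simp
  add_mem' := by
    intro a b ha hb w hw
    simp [add_dotProduct, ha w hw, hb w hw]
  smul_mem' := by
    intro c a ha w hw
    simp [smul_dotProduct, ha w hw]

/-- `N` is a reducing subspace for the matrix `M`: both `N` and `N^⊥` are invariant. -/
def IsReducing {m : Type*} [Fintype m] (M : Matrix m m ℝ) (N : Submodule ℝ (m → ℝ)) :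
    Prop :=
  (∀ v ∈ N, M.mulVec v ∈ N) ∧ (∀ v ∈ perpSpace N, M.mulVec v ∈ perpSpace N)

/-- The tuple `X` is irreducible over `ℝ`: the `X i` have no common reducing subspace
other than `⊥` and `⊤`. -/
def IsIrred {g : ℕ} {m : Type*} [Fintype m] (X : Fin g → Matrix m m ℝ) : Prop :=
  ∀ N : Submodule ℝ (m → ℝ), (∀ i, IsReducing (X i) N) → N = ⊥ ∨ N = ⊤

/-! Write `ιⱼ` for the inclusion of the `j`-th summand and `W j = U ιⱼ`. Since `Y W j = W j Z j`,
the range of the isometry `W j` reduces `Y` and `Z j` is the compression of `Y` to it. A dilation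
`[[Z j, β], [βᵀ, γ]] ∈ D_A` can then be spliced into `Y`: compressing `Y ⊕ [[Z j, β], [βᵀ, γ]]`
by the isometry `[[1 - W j (W j)ᵀ, 0], [(W j)ᵀ, 0], [0, 1]]` gives the dilation
`[[Y, W j β], [(W j β)ᵀ, γ]] ∈ D_A`, so Arveson extremality of `Y` forces `W j β = 0`, i.e.
`β = 0`. Since `∑ j, W j (W j)ᵀ = 1`, compressing `Y` to its top-left corner by `E : ℝⁿ → ℝⁿ⁺ᵏ`
writes `X` as `∑ j, (V j)ᵀ Z j (V j)` with `V j = (W j)ᵀ E`, and the orthogonality of `U` forces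
`∑ j, sz j = n + k`. -/

theorem Matrix.PosSemidef.fromBlocks_zero {p q : Type*} [Fintype p] [Fintype q]
    {M : Matrix p p ℝ} {N : Matrix q q ℝ} (hM : M.PosSemidef) (hN : N.PosSemidef) :
    (fromBlocks M 0 0 N).PosSemidef := by
  refine .of_dotProduct_mulVec_nonneg (hM.1.fromBlocks (by simp) hN.1) fun x => ?_
  rw [← Sum.elim_comp_inl_inr x, fromBlocks_mulVec]
  simp only [zero_mulVec, add_zero, zero_add, Function.star_sumElim, sumElim_dotProduct_sumElim,
    Sum.elim_comp_inl, Sum.elim_comp_inr]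
  exact add_nonneg (hM.dotProduct_mulVec_nonneg _) (hN.dotProduct_mulVec_nonneg _)

section Pencil

variable {g : ℕ} {D p q : Type*} [Fintype D] [Fintype p] [Fintype q]
  [DecidableEq D] [DecidableEq p] [DecidableEq q] (A : Fin g → Matrix D D ℝ)

theorem LA_conj (X : Fin g → Matrix p p ℝ) {V : Matrix p q ℝ} (hV : Vᵀ * V = 1) :
    LA A (fun i => Vᵀ * X i * V) =
      ((1 : Matrix D D ℝ) ⊗ₖ V)ᵀ * LA A X * ((1 : Matrix D D ℝ) ⊗ₖ V) := by
  rw [LA, LA, Matrix.mul_sub, Matrix.sub_mul, Matrix.mul_one, Matrix.mul_sum, Matrix.sum_mul,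
    ← kroneckerMap_transpose, transpose_one, ← mul_kronecker_mul, Matrix.one_mul, hV,
    one_kronecker_one]
  simp only [← mul_kronecker_mul, Matrix.one_mul, Matrix.mul_one]

theorem InDA.conj {A : Fin g → Matrix D D ℝ} {X : Fin g → Matrix p p ℝ} (hX : InDA A X)
    {V : Matrix p q ℝ} (hV : Vᵀ * V = 1) : InDA A (fun i => Vᵀ * X i * V) := by
  refine ⟨fun i => ?_, ?_⟩
  · simp only [IsSymm, transpose_mul, transpose_transpose, (hX.1 i).eq, Matrix.mul_assoc]
  · rw [LA_conj A X hV]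
    have h := hX.2.conjTranspose_mul_mul_same ((1 : Matrix D D ℝ) ⊗ₖ V)
    rwa [conjTranspose_eq_transpose_of_trivial] at h

theorem LA_fromBlocks_zero (X : Fin g → Matrix p p ℝ) (X' : Fin g → Matrix q q ℝ) :
    LA A (fun i => fromBlocks (X i) 0 0 (X' i)) =
      (fromBlocks (LA A X) 0 0 (LA A X')).submatrix (Equiv.prodSumDistrib D p q)
        (Equiv.prodSumDistrib D p q) := by
  ext ⟨d₁, a⟩ ⟨d₂, b⟩
  cases a <;> cases b <;>
    simp [LA, Matrix.sub_apply, Matrix.sum_apply, one_apply, Prod.ext_iff]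

theorem InDA.fromBlocks_zero {A : Fin g → Matrix D D ℝ} {X : Fin g → Matrix p p ℝ}
    {X' : Fin g → Matrix q q ℝ} (hX : InDA A X) (hX' : InDA A X') :
    InDA A (fun i => fromBlocks (X i) 0 0 (X' i)) := by
  refine ⟨fun i => ?_, ?_⟩
  · simp [IsSymm, fromBlocks_transpose, (hX.1 i).eq, (hX'.1 i).eq]
  · rw [LA_fromBlocks_zero]
    exact (hX.2.fromBlocks_zero hX'.2).submatrix _

end Pencil

section Splice

variable {N m k : Type*} [Fintype N] [Fintype m] [Fintype k]
  [DecidableEq N] [DecidableEq m] [DecidableEq k]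

def spliceIsometry (k : Type*) [DecidableEq k] (W : Matrix N m ℝ) :
    Matrix (N ⊕ (m ⊕ k)) (N ⊕ k) ℝ :=
  fromBlocks (1 - W * Wᵀ) 0 (fromRows Wᵀ 0) (fromRows 0 1)

theorem spliceIsometry_transpose_mul_self {W : Matrix N m ℝ} (hW : Wᵀ * W = 1) :
    (spliceIsometry k W)ᵀ * spliceIsometry k W = 1 := by
  have hP : (1 - W * Wᵀ) * (1 - W * Wᵀ) + W * Wᵀ = 1 := by
    rw [Matrix.sub_mul, Matrix.one_mul, Matrix.mul_sub, Matrix.mul_one, Matrix.mul_assoc,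
      ← Matrix.mul_assoc Wᵀ, hW, Matrix.one_mul]
    abel
  simp [spliceIsometry, fromBlocks_transpose, fromBlocks_multiply, transpose_fromRows,
    fromCols_mul_fromRows, Matrix.transpose_sub, hP]

theorem spliceIsometry_conj {W : Matrix N m ℝ} (hW : Wᵀ * W = 1) {Y : Matrix N N ℝ}
    {Z : Matrix m m ℝ} (hYW : Y * W = W * Z) (hWY : Wᵀ * Y = Z * Wᵀ)
    (β : Matrix m k ℝ) (γ : Matrix k k ℝ) :
    (spliceIsometry k W)ᵀ * fromBlocks Y 0 0 (fromBlocks Z β βᵀ γ) * spliceIsometry k W =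
      fromBlocks Y (W * β) (W * β)ᵀ γ := by
  have hYP : Y * (W * Wᵀ) = W * Z * Wᵀ := by rw [← Matrix.mul_assoc, hYW]
  have hPY : W * Wᵀ * Y = W * Z * Wᵀ := by rw [Matrix.mul_assoc, hWY, Matrix.mul_assoc]
  have hPK : W * Wᵀ * (W * Z * Wᵀ) = W * Z * Wᵀ := by
    rw [Matrix.mul_assoc W, ← Matrix.mul_assoc Wᵀ, ← Matrix.mul_assoc Wᵀ, hW, Matrix.one_mul,
      Matrix.mul_assoc]
  have hY : (1 - W * Wᵀ) * (Y * (1 - W * Wᵀ)) + W * (Z * Wᵀ) = Y := by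
    rw [Matrix.mul_sub, Matrix.mul_one, hYP, Matrix.sub_mul, Matrix.one_mul, Matrix.mul_sub, hPY,
      hPK, ← Matrix.mul_assoc W]
    abel
  rw [spliceIsometry, Matrix.mul_assoc, fromBlocks_multiply]
  simp only [fromBlocks_mul_fromRows, Matrix.mul_zero, Matrix.zero_mul, Matrix.mul_one,
    add_zero, zero_add]
  rw [fromBlocks_transpose, fromBlocks_multiply]
  simp only [transpose_fromRows, fromCols_mul_fromRows, Matrix.transpose_zero, Matrix.transpose_one,
    Matrix.mul_zero, Matrix.zero_mul, Matrix.one_mul, add_zero, zero_add, transpose_mul,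
    Matrix.transpose_sub, transpose_transpose, hY]

end Splice

theorem IsArvExt.of_intertwining_isometry {g d N m : ℕ} {A : Fin g → Matrix (Fin d) (Fin d) ℝ}
    {Y : Fin g → Matrix (Fin N) (Fin N) ℝ} (hY : IsArvExt A Y)
    {Z : Fin g → Matrix (Fin m) (Fin m) ℝ} {W : Matrix (Fin N) (Fin m) ℝ} (hW : Wᵀ * W = 1)
    (hYW : ∀ i, Y i * W = W * Z i) : IsArvExt A Z := by
  have hZ : ∀ i, Wᵀ * Y i * W = Z i := fun i => by
    rw [Matrix.mul_assoc, hYW, ← Matrix.mul_assoc, hW, Matrix.one_mul]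
  have hZin : InDA A Z := by simpa only [hZ] using hY.1.conj hW
  have hWY : ∀ i, Wᵀ * Y i = Z i * Wᵀ := fun i => by
    simpa only [transpose_mul, (hY.1.1 i).eq, (hZin.1 i).eq] using congrArg transpose (hYW i)
  refine ⟨hZin, fun k β γ hdil => ?_⟩
  have hspliced := (hY.1.fromBlocks_zero hdil).conj
    (spliceIsometry_transpose_mul_self (k := Fin k) hW)
  simp only [spliceIsometry_conj hW (hYW _) (hWY _)] at hspliced
  have hWβ := hY.2 k _ γ hspliced
  funext i
  calc β i = Wᵀ * (W * β i) := by rw [← Matrix.mul_assoc, hW, Matrix.one_mul]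
    _ = 0 := by rw [congrFun hWβ i, Pi.zero_apply, Matrix.mul_zero]

theorem Matrix.card_le_card_of_mul_eq_one {m n : Type*} [Fintype m] [Fintype n] [DecidableEq m]
    {A : Matrix m n ℝ} {B : Matrix n m ℝ} (h : A * B = 1) : Fintype.card m ≤ Fintype.card n :=
  calc Fintype.card m = (A * B).rank := by rw [h, rank_one]
    _ ≤ A.rank := rank_mul_le_left A B
    _ ≤ Fintype.card n := rank_le_card_width A

theorem Matrix.transpose_one_submatrix_mul_mul {m n : Type*} [Fintype m] [DecidableEq m]
    (M : Matrix m m ℝ) (e : n → m) :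
    ((1 : Matrix m m ℝ).submatrix id e)ᵀ * M * (1 : Matrix m m ℝ).submatrix id e =
      M.submatrix e e := by
  ext a b
  simp [Matrix.mul_apply, one_apply]

theorem Matrix.transpose_one_submatrix_mul_self {m n : Type*} [Fintype m] [DecidableEq m]
    [DecidableEq n] {e : n → m} (he : Function.Injective e) :
    ((1 : Matrix m m ℝ).submatrix id e)ᵀ * (1 : Matrix m m ℝ).submatrix id e = 1 := by
  simpa [submatrix_one _ he] using transpose_one_submatrix_mul_mul (1 : Matrix m m ℝ) e

section BlockIncl

variable {ι : Type*} [Fintype ι] [DecidableEq ι] {m : ι → Type*} [∀ i, Fintype (m i)]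
  [∀ i, DecidableEq (m i)]

def blockIncl (m : ι → Type*) [∀ i, DecidableEq (m i)] (j : ι) : Matrix (Σ i, m i) (m j) ℝ :=
  (1 : Matrix (Σ i, m i) (Σ i, m i) ℝ).submatrix id (Sigma.mk j)

theorem blockIncl_transpose_mul_self (j : ι) : (blockIncl m j)ᵀ * blockIncl m j = 1 :=
  transpose_one_submatrix_mul_self sigma_mk_injective

theorem sum_blockIncl_mul_transpose : ∑ j, blockIncl m j * (blockIncl m j)ᵀ = 1 := by
  ext s t
  let I : Matrix (Σ i, m i) (Σ i, m i) ℝ := 1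
  simp only [Matrix.sum_apply, Matrix.mul_apply]
  change ∑ j, ∑ x, I s ⟨j, x⟩ * I t ⟨j, x⟩ = I s t
  rw [← Fintype.sum_sigma (fun x => I s x * I t x)]
  simp [I, one_apply]

theorem blockDiagonal'_mul_blockIncl (B : ∀ i, Matrix (m i) (m i) ℝ) (j : ι) :
    blockDiagonal' B * blockIncl m j = blockIncl m j * B j := by
  ext ⟨i, a⟩ b
  by_cases h : i = j
  · subst h
    simp [blockIncl, Matrix.mul_apply, one_apply]
  · simp [blockIncl, Matrix.mul_apply, one_apply, h, blockDiagonal'_apply_ne]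

end BlockIncl

theorem conj_eq_sum_of_intertwining {ι N n : Type*} [Fintype ι] [Fintype N] [DecidableEq N]
    {m : ι → Type*} [∀ j, Fintype (m j)] {W : ∀ j, Matrix N (m j) ℝ}
    (hW : ∑ j, W j * (W j)ᵀ = 1) {Y : Matrix N N ℝ} {Z : ∀ j, Matrix (m j) (m j) ℝ}
    (hYW : ∀ j, Y * W j = W j * Z j) (E : Matrix N n ℝ) :
    Eᵀ * Y * E = ∑ j, ((W j)ᵀ * E)ᵀ * Z j * ((W j)ᵀ * E) :=
  calc Eᵀ * Y * E = Eᵀ * (Y * ∑ j, W j * (W j)ᵀ) * E := by rw [hW, Matrix.mul_one]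
    _ = ∑ j, Eᵀ * (W j * Z j * (W j)ᵀ) * E := by
      simp only [Matrix.mul_sum, Matrix.sum_mul, ← Matrix.mul_assoc Y, hYW]
    _ = ∑ j, ((W j)ᵀ * E)ᵀ * Z j * ((W j)ᵀ * E) := by
      simp only [transpose_mul, transpose_transpose, Matrix.mul_assoc]

theorem arveson_dilation_free_extreme_decomposition_general {g d n k ℓ : ℕ}
    (A : Fin g → Matrix (Fin d) (Fin d) ℝ)
    (X : Fin g → Matrix (Fin n) (Fin n) ℝ)
    (Y : Fin g → Matrix (Fin (n + k)) (Fin (n + k)) ℝ)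
    (hYArv : IsArvExt A Y)
    (hdil : ∀ i, (Y i).submatrix (Fin.castAdd k) (Fin.castAdd k) = X i)
    (sz : Fin ℓ → ℕ)
    (Z : ∀ j : Fin ℓ, Fin g → Matrix (Fin (sz j)) (Fin (sz j)) ℝ)
    (U : Matrix (Fin (n + k)) ((j : Fin ℓ) × Fin (sz j)) ℝ)
    (hU1 : Uᵀ * U = 1) (hU2 : U * Uᵀ = 1)
    (hUY : ∀ i, Uᵀ * Y i * U = Matrix.blockDiagonal' (fun j => Z j i))
    (hZirr : ∀ j, IsIrred (Z j)) :
    (∀ j, IsIrred (Z j) ∧ IsArvExt A (Z j)) ∧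
    ∃ V : ∀ j : Fin ℓ, Matrix (Fin (sz j)) (Fin n) ℝ,
      (∀ i, X i = ∑ j, (V j)ᵀ * Z j i * V j) ∧
      (∑ j, (V j)ᵀ * V j = 1) ∧
      (∑ j, sz j = n + k) := by
  set P := blockIncl (fun j => Fin (sz j))
  set W := fun j => U * P j
  have hW : ∀ j, (W j)ᵀ * W j = 1 := fun j => by
    rw [transpose_mul, Matrix.mul_assoc, ← Matrix.mul_assoc Uᵀ, hU1, Matrix.one_mul,
      blockIncl_transpose_mul_self]
  have hYU : ∀ i, Y i * U = U * blockDiagonal' (fun j => Z j i) := fun i => by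
    rw [← hUY, ← Matrix.mul_assoc, ← Matrix.mul_assoc, hU2, Matrix.one_mul]
  have hYW : ∀ i j, Y i * W j = W j * Z j i := fun i j => by
    rw [← Matrix.mul_assoc, hYU, Matrix.mul_assoc, blockDiagonal'_mul_blockIncl,
      ← Matrix.mul_assoc]
  have hWW : ∑ j, W j * (W j)ᵀ = 1 := by
    calc ∑ j, W j * (W j)ᵀ
        = U * (∑ j, P j * (P j)ᵀ) * Uᵀ := by
          simp only [W, transpose_mul, Matrix.mul_sum, Matrix.sum_mul, Matrix.mul_assoc]
      _ = 1 := by rw [sum_blockIncl_mul_transpose, Matrix.mul_one, hU2]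
  set E := (1 : Matrix (Fin (n + k)) (Fin (n + k)) ℝ).submatrix id (Fin.castAdd k)
  refine ⟨fun j => ⟨hZirr j, hYArv.of_intertwining_isometry (hW j) (hYW · j)⟩,
    fun j => (W j)ᵀ * E, fun i => ?_, ?_, ?_⟩
  · rw [← hdil i, ← transpose_one_submatrix_mul_mul]
    exact conj_eq_sum_of_intertwining hWW (hYW i) E
  · have hE : Eᵀ * E = 1 := transpose_one_submatrix_mul_self (Fin.castAdd_injective n k)
    have h := conj_eq_sum_of_intertwining hWW (Y := 1) (Z := fun _ => 1) (by simp) E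
    simpa only [Matrix.mul_one, hE] using h.symm
  · have := (card_le_card_of_mul_eq_one hU2).antisymm (card_le_card_of_mul_eq_one hU1)
    simpa using this.symm

/-- if `Y ∈ D_A(n+k)` is an Arveson extreme dilation of `X ∈ D_A(n)` and
`UᵀYU = ⊕_j Z^j` with each `Z^j` irreducible, then each `Z^j` is a free extreme point
(irreducible and Arveson extreme), and `X` is a matrix convex combination of the `Z^j`
whose sizes sum to `n + k`. -/
theorem arveson_dilation_free_extreme_decomposition {g d n k ℓ : ℕ}
    (A : Fin g → Matrix (Fin d) (Fin d) ℝ) (hA : ∀ i, (A i).IsSymm)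
    (X : Fin g → Matrix (Fin n) (Fin n) ℝ) (hX : InDA A X)
    (Y : Fin g → Matrix (Fin (n + k)) (Fin (n + k)) ℝ)
    (hYArv : IsArvExt A Y)
    (hdil : ∀ i, (Y i).submatrix (Fin.castAdd k) (Fin.castAdd k) = X i)
    (sz : Fin ℓ → ℕ)
    (Z : ∀ j : Fin ℓ, Fin g → Matrix (Fin (sz j)) (Fin (sz j)) ℝ)
    (U : Matrix (Fin (n + k)) ((j : Fin ℓ) × Fin (sz j)) ℝ)
    (hU1 : Uᵀ * U = 1) (hU2 : U * Uᵀ = 1)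
    (hUY : ∀ i, Uᵀ * Y i * U = Matrix.blockDiagonal' (fun j => Z j i))
    (hZirr : ∀ j, IsIrred (Z j)) :
    (∀ j, IsIrred (Z j) ∧ IsArvExt A (Z j)) ∧
    ∃ V : ∀ j : Fin ℓ, Matrix (Fin (sz j)) (Fin n) ℝ,
      (∀ i, X i = ∑ j, (V j)ᵀ * Z j i * V j) ∧
      (∑ j, (V j)ᵀ * V j = 1) ∧
      (∑ j, sz j = n + k) :=
  arveson_dilation_free_extreme_decomposition_general A X Y hYArv hdil sz Z U hU1 hU2 hUY hZirr
end
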